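/- arXiv:1906.04647 — 9 statements merged into one kernel-verified Lean document; each statement's English description precedes it below -/
import Mathlib

section
/- (Proposition 2.2, part 1.) Let β > 0 and let A be a real symmetric p×p matrix with spectral decomposition A = Q·Diag(d₁,…,d_p)·Qᵀ, Q orthogonal. Then X* = φ⁺_β(A) is the unique minimizer over symmetric positive definite p×p matrices B of the function B ↦ −log det(B) + (1/(2β))·‖B − A‖²; that is, X* is symmetric positive definite and for every symmetric positive definite B ≠ X*, −log det(X*) + (1/(2β))‖X* − A‖² < −log det(B) + (1/(2β))‖B − A‖². -/
open Matrix

lemma conj_posDef {n : Type*} [Fintype n] [DecidableEq n] {Q D : Matrix n n ℝ}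
    (hD : D.PosDef) (hQ : IsUnit Q.det) : (Q * D * Qᵀ).PosDef := by
  refine PosDef.of_dotProduct_mulVec_pos ?_ ?_
  · show (Q * D * Qᵀ)ᴴ = _
    rw [conjTranspose_eq_transpose_of_trivial, transpose_mul, transpose_mul,
      transpose_transpose]
    rw [show Dᵀ = D from by
      have := hD.1; rwa [IsHermitian, conjTranspose_eq_transpose_of_trivial] at this]
    rw [Matrix.mul_assoc]
  · intro x hx
    have hQt : IsUnit (Qᵀ : Matrix n n ℝ) := by
      rw [Matrix.isUnit_iff_isUnit_det, det_transpose]; exact hQ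
    have hinj : Function.Injective (Qᵀ.mulVec) := mulVec_injective_iff_isUnit.mpr hQt
    have hx' : Qᵀ *ᵥ x ≠ 0 := fun h => hx (hinj (by simpa using h))
    have := hD.dotProduct_mulVec_pos hx'
    have e : star x ⬝ᵥ ((Q * D * Qᵀ) *ᵥ x)
        = star (Qᵀ *ᵥ x) ⬝ᵥ (D *ᵥ (Qᵀ *ᵥ x)) := by
      simp only [star_trivial, ← mulVec_mulVec, dotProduct_mulVec]
      rw [show x ᵥ* Q = Qᵀ *ᵥ x from by rw [mulVec_transpose]]
    rw [e]; exact this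

lemma logdet_le {n : ℕ} {M : Matrix (Fin n) (Fin n) ℝ} (hM : M.PosDef) :
    Real.log M.det ≤ M.trace - n := by
  have hH := hM.isHermitian
  have heig := hM.eigenvalues_pos
  have hdet : M.det = ∏ i, hH.eigenvalues i := by
    simpa using hH.det_eq_prod_eigenvalues
  have htr : M.trace = ∑ i, hH.eigenvalues i := by
    simpa using hH.trace_eq_sum_eigenvalues
  rw [hdet, htr, Real.log_prod (fun i _ => (heig i).ne')]
  calc ∑ i, Real.log (hH.eigenvalues i) ≤ ∑ i, (hH.eigenvalues i - 1) :=
        Finset.sum_le_sum fun i _ => Real.log_le_sub_one_of_pos (heig i)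
    _ = (∑ i, hH.eigenvalues i) - n := by
        rw [Finset.sum_sub_distrib]; simp

lemma frob {n : Type*} [Fintype n] (M : Matrix n n ℝ) :
    Matrix.trace (Mᵀ * M) = ∑ i, ∑ j, (M i j)^2 := by
  simp only [Matrix.trace, Matrix.diag, Matrix.mul_apply, Matrix.transpose_apply, sq]
  exact Finset.sum_comm

/-- Proposition 2.2, part 1: For `β > 0` and a real symmetric `p×p` matrix
`A = Q ⬝ diag(d) ⬝ Qᵀ` with `Q` orthogonal, `X* = φ⁺_β(A) = Q ⬝ diag(φ⁺_β(dᵢ)) ⬝ Qᵀ`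
is the unique minimizer over symmetric positive definite matrices `B` of
`B ↦ -log det B + (1/(2β)) * ‖B - A‖²` (Frobenius norm). -/
theorem stmt2 {p : ℕ} (β : ℝ) (hβ : 0 < β)
    (A Q : Matrix (Fin p) (Fin p) ℝ) (d : Fin p → ℝ)
    (hA : A.IsSymm)
    (hQ : Q * Qᵀ = 1) (hQ' : Qᵀ * Q = 1)
    (hdecomp : A = Q * Matrix.diagonal d * Qᵀ)
    (Xstar : Matrix (Fin p) (Fin p) ℝ)
    (hXstar : Xstar = Q * Matrix.diagonal (fun i => (Real.sqrt ((d i) ^ 2 + 4 * β) + d i) / 2) * Qᵀ) :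
    Xstar.PosDef ∧
    ∀ B : Matrix (Fin p) (Fin p) ℝ, B.PosDef → B ≠ Xstar →
      -Real.log Xstar.det + (1 / (2 * β)) * ∑ i, ∑ j, (Xstar i j - A i j) ^ 2
        < -Real.log B.det + (1 / (2 * β)) * ∑ i, ∑ j, (B i j - A i j) ^ 2 := by
  set φ : Fin p → ℝ := fun i => (Real.sqrt ((d i) ^ 2 + 4 * β) + d i) / 2 with hφ
  -- basic facts about φ
  have hsq : ∀ i, |d i| < Real.sqrt ((d i) ^ 2 + 4 * β) := by
    intro i
    rw [← Real.sqrt_sq_eq_abs]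
    exact Real.sqrt_lt_sqrt (sq_nonneg _) (by linarith)
  have hφpos : ∀ i, 0 < φ i := by
    intro i
    have := hsq i
    have := abs_nonneg (d i)
    have := neg_abs_le (d i)
    simp only [hφ]
    linarith
  have hφd : ∀ i, φ i * (φ i - d i) = β := by
    intro i
    have h : (Real.sqrt ((d i) ^ 2 + 4 * β)) ^ 2 = (d i) ^ 2 + 4 * β :=
      Real.sq_sqrt (by positivity)
    simp only [hφ]
    nlinarith [h, Real.sqrt_nonneg ((d i)^2+4*β)]
  have hQdet : IsUnit Q.det := by
    apply IsUnit.of_mul_eq_one (a := Q.det) Qᵀ.det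
    rw [← det_mul, hQ, det_one]
  -- multiplication of conjugated diagonals
  have hmul : ∀ a b : Fin p → ℝ,
      (Q * Matrix.diagonal a * Qᵀ) * (Q * Matrix.diagonal b * Qᵀ)
        = Q * Matrix.diagonal (fun i => a i * b i) * Qᵀ := by
    intro a b
    simp only [Matrix.mul_assoc]
    rw [← Matrix.mul_assoc Qᵀ Q, hQ', Matrix.one_mul,
      ← Matrix.mul_assoc (Matrix.diagonal a), diagonal_mul_diagonal]
  set N : Matrix (Fin p) (Fin p) ℝ := Q * Matrix.diagonal (fun i => (φ i)⁻¹) * Qᵀ with hN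
  set s : Fin p → ℝ := fun i => Real.sqrt (φ i)⁻¹ with hs
  set S : Matrix (Fin p) (Fin p) ℝ := Q * Matrix.diagonal s * Qᵀ with hS
  have hXpos : Xstar.PosDef := by
    rw [hXstar]
    exact conj_posDef (.diagonal hφpos) hQdet
  have hNpos : N.PosDef :=
    conj_posDef (.diagonal fun i => inv_pos.mpr (hφpos i)) hQdet
  have hSpos : S.PosDef :=
    conj_posDef (.diagonal fun i => Real.sqrt_pos.mpr (inv_pos.mpr (hφpos i))) hQdet
  have hss : (fun i => s i * s i) = fun i => (φ i)⁻¹ :=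
    funext fun i => Real.mul_self_sqrt (inv_nonneg.mpr (hφpos i).le)
  have hSS : S * S = N := by
    rw [hS, hmul, hss, hN]
  have hXN : Xstar * N = 1 := by
    rw [hXstar, hN, hmul]
    have : (fun i => φ i * (φ i)⁻¹) = fun _ => (1:ℝ) := by
      ext i; exact mul_inv_cancel₀ (hφpos i).ne'
    rw [this, diagonal_one, Matrix.mul_one, hQ]
  have hXmA : Xstar - A = β • N := by
    rw [hXstar, hdecomp, hN, ← Matrix.sub_mul, ← Matrix.mul_sub, diagonal_sub]
    have : (Matrix.diagonal fun i => φ i - d i)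
        = β • Matrix.diagonal (fun i => (φ i)⁻¹) := by
      ext i j
      rcases eq_or_ne i j with rfl | hij
      · simp only [Matrix.diagonal_apply_eq, Matrix.smul_apply, smul_eq_mul]
        have h1 := hφd i
        have h2 := (hφpos i).ne'
        field_simp
        linear_combination h1
      · simp [Matrix.diagonal_apply_ne _ hij]
    rw [this, Matrix.mul_smul, Matrix.smul_mul]
  refine ⟨hXpos, ?_⟩
  intro B hB hBne
  -- symmetry facts
  have symm_of_pd : ∀ {M : Matrix (Fin p) (Fin p) ℝ}, M.PosDef → Mᵀ = M := by
    intro M hM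
    have := hM.1
    rwa [IsHermitian, conjTranspose_eq_transpose_of_trivial] at this
  have hBs := symm_of_pd hB
  have hXs := symm_of_pd hXpos
  have hNs := symm_of_pd hNpos
  have hSs := symm_of_pd hSpos
  set E : Matrix (Fin p) (Fin p) ℝ := B - Xstar with hE
  have hEs : Eᵀ = E := by rw [hE, transpose_sub, hBs, hXs]
  -- trace identities
  have htrXN : Matrix.trace (Xstar * N) = (p : ℝ) := by
    rw [hXN, trace_one]; simp
  have htrEN : Matrix.trace (E * N) = Matrix.trace (B * N) - (p : ℝ) := by
    rw [hE, Matrix.sub_mul, trace_sub, htrXN]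
  -- Frobenius expansion
  have hBA : B - A = E + β • N := by rw [hE, ← hXmA]; abel
  have hFB : ∑ i, ∑ j, (B i j - A i j) ^ 2
      = Matrix.trace (E * E) + 2 * β * (Matrix.trace (B * N) - (p:ℝ))
        + (β * β) * Matrix.trace (N * N) := by
    have h0 : ∑ i, ∑ j, (B i j - A i j) ^ 2 = Matrix.trace ((B - A)ᵀ * (B - A)) := by
      rw [frob]; simp [Matrix.sub_apply]
    rw [h0, hBA, transpose_add, hEs, Matrix.transpose_smul, hNs]
    simp only [Matrix.add_mul, Matrix.mul_add, Matrix.smul_mul, Matrix.mul_smul,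
      trace_add, trace_smul, smul_smul, smul_eq_mul]
    rw [trace_mul_comm N E, htrEN]
    ring
  have hFX : ∑ i, ∑ j, (Xstar i j - A i j) ^ 2 = (β * β) * Matrix.trace (N * N) := by
    have h0 : ∑ i, ∑ j, (Xstar i j - A i j) ^ 2
        = Matrix.trace ((Xstar - A)ᵀ * (Xstar - A)) := by
      rw [frob]; simp [Matrix.sub_apply]
    rw [h0, hXmA, Matrix.transpose_smul, hNs, Matrix.smul_mul, Matrix.mul_smul,
      trace_smul, trace_smul, smul_smul]
    simp [mul_assoc]
  -- determinant facts
  have hdetX : 0 < Xstar.det := hXpos.det_pos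
  have hdetB : 0 < B.det := hB.det_pos
  have hdetNX : N.det * Xstar.det = 1 := by
    have := congrArg Matrix.det hXN
    rw [det_mul, det_one] at this
    linarith [this]
  have hdetN : N.det = (Xstar.det)⁻¹ := by
    field_simp
    linarith [hdetNX]
  -- log-det inequality
  have hSBS : (S * B * S).PosDef := by
    have : (S * B * Sᵀ).PosDef := conj_posDef hB hSpos.det_pos.ne'.isUnit
    rwa [hSs] at this
  have hlog1 : Real.log ((S * B * S).det) ≤ Matrix.trace (S * B * S) - (p : ℝ) := by
    simpa using logdet_le hSBS
  have hdetSS : S.det * S.det = N.det := by rw [← det_mul, hSS]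
  have hdetSBS : (S * B * S).det = B.det * (Xstar.det)⁻¹ := by
    rw [det_mul, det_mul, ← hdetN, ← hdetSS]
    ring
  have htrSBS : Matrix.trace (S * B * S) = Matrix.trace (B * N) := by
    rw [trace_mul_cycle S B S, hSS, trace_mul_comm]
  have hlog : Real.log B.det - Real.log Xstar.det ≤ Matrix.trace (B * N) - (p:ℝ) := by
    have := hlog1
    rw [hdetSBS, htrSBS, Real.log_mul hdetB.ne' (inv_ne_zero hdetX.ne'),
      Real.log_inv] at this
    linarith
  -- strict positivity of ‖E‖²
  have hEpos : 0 < Matrix.trace (E * E) := by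
    have hfr : Matrix.trace (E * E) = ∑ i, ∑ j, (E i j)^2 := by
      rw [← frob E, hEs]
    rw [hfr]
    have hne : E ≠ 0 := sub_ne_zero.mpr hBne
    rcases Function.ne_iff.mp (fun h => hne (Matrix.ext fun i j => congrFun (congrFun h i) j)) with ⟨i, hi⟩
    rcases Function.ne_iff.mp hi with ⟨j, hij⟩
    have h1 : 0 < ∑ j, (E i j)^2 := by
      apply Finset.sum_pos' (fun k _ => sq_nonneg _)
      exact ⟨j, Finset.mem_univ j, by simpa using sq_pos_of_ne_zero hij⟩
    apply Finset.sum_pos' (fun k _ => Finset.sum_nonneg fun l _ => sq_nonneg _)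
    exact ⟨i, Finset.mem_univ i, h1⟩
  -- final assembly
  rw [hFB, hFX]
  have hc : 0 < 1 / (2 * β) := by positivity
  have hkey : (1 / (2*β)) * (Matrix.trace (E * E) + 2 * β * (Matrix.trace (B * N) - (p:ℝ))
        + (β * β) * Matrix.trace (N * N))
      = (1 / (2*β)) * Matrix.trace (E * E) + (Matrix.trace (B * N) - (p:ℝ))
        + (1 / (2*β)) * ((β * β) * Matrix.trace (N * N)) := by
    field_simp
  rw [hkey]
  have := mul_pos hc hEpos
  linarith
end

section
/- (Proposition 2.2, part 2.) Let β > 0 and let A be a real symmetric p×p matrix with spectral decomposition A = Q·Diag(d₁,…,d_p)·Qᵀ, Q orthogonal. Then the infimum over symmetric positive definite p×p matrices B of β·(−log det B) + (1/2)‖B − A‖² equals −β·log det(φ⁺_β(A)) + (1/2)‖φ⁻_β(A)‖², and this infimum is attained at B = φ⁺_β(A). -/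
open Matrix Finset

section aux
variable {p : ℕ}

lemma frob_trace (M N : Matrix (Fin p) (Fin p) ℝ) :
    ∑ i, ∑ j, M i j * N i j = (M * Nᵀ).trace := by
  simp [Matrix.trace, Matrix.mul_apply, Matrix.diag, mul_comm]

lemma posdef_conj {C M : Matrix (Fin p) (Fin p) ℝ} (hC : C.PosDef) (hM : IsUnit M.det) :
    (M * C * Mᵀ).PosDef := by
  have hMt : Mᵀ = Mᴴ := (Matrix.conjTranspose_eq_transpose_of_trivial M).symm
  refine Matrix.PosDef.of_dotProduct_mulVec_pos ?_ ?_
  · rw [hMt]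
    exact Matrix.isHermitian_mul_mul_conjTranspose M hC.1
  · intro x hx
    have hy : Mᵀ *ᵥ x ≠ 0 := by
      have hinj : Function.Injective (Mᵀ.mulVec) := by
        rw [Matrix.mulVec_injective_iff_isUnit]
        exact (Matrix.isUnit_iff_isUnit_det _).2 (by simpa using hM)
      intro h
      exact hx (hinj (by simpa using h))
    have hpos := hC.dotProduct_mulVec_pos hy
    have hrw : star x ⬝ᵥ (M * C * Mᵀ) *ᵥ x = star (Mᵀ *ᵥ x) ⬝ᵥ C *ᵥ (Mᵀ *ᵥ x) := by
      rw [star_trivial, star_trivial, ← Matrix.mulVec_mulVec, ← Matrix.mulVec_mulVec,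
        Matrix.dotProduct_mulVec x M, ← Matrix.mulVec_transpose]
    rw [hrw]
    exact hpos

lemma log_det_le_trace {C : Matrix (Fin p) (Fin p) ℝ} (hC : C.PosDef) :
    Real.log C.det ≤ C.trace - p := by
  have hμ := hC.eigenvalues_pos
  have hdet : C.det = ∏ i, hC.1.eigenvalues i := by simpa using hC.1.det_eq_prod_eigenvalues
  have htr : C.trace = ∑ i, hC.1.eigenvalues i := by
    simpa using hC.1.trace_eq_sum_eigenvalues
  rw [hdet, Real.log_prod (fun i _ => (hμ i).ne'), htr]
  have h := Finset.sum_le_sum (fun i (_ : i ∈ Finset.univ) =>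
    Real.log_le_sub_one_of_pos (hμ i))
  simpa [Finset.sum_sub_distrib] using h

open scoped MatrixOrder in
lemma logdet_ineq {X B : Matrix (Fin p) (Fin p) ℝ} (hX : X.PosDef) (hB : B.PosDef) :
    Real.log B.det - Real.log X.det ≤ (X⁻¹ * B).trace - p := by
  set S := CFC.sqrt B with hSdef
  have hSS : S * S = B := CFC.sqrt_mul_sqrt_self B hB.posSemidef.nonneg
  have hSsymm : Sᵀ = S := by
    have h := (CFC.sqrt_nonneg B).posSemidef.1
    rwa [Matrix.IsHermitian, Matrix.conjTranspose_eq_transpose_of_trivial] at h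
  have hdetS : S.det * S.det = B.det := by rw [← Matrix.det_mul, hSS]
  have hdetSne : S.det ≠ 0 := by
    intro h; rw [h, mul_zero] at hdetS; exact hB.det_pos.ne (hdetS)
  have hC : (S * X⁻¹ * Sᵀ).PosDef := posdef_conj hX.inv hdetSne.isUnit
  have h1 := log_det_le_trace hC
  have hXdet : X.det ≠ 0 := hX.det_pos.ne'
  have hdetC : (S * X⁻¹ * Sᵀ).det = B.det * (X.det)⁻¹ := by
    rw [Matrix.det_mul, Matrix.det_mul, Matrix.det_transpose, Matrix.det_nonsing_inv,
      Ring.inverse_eq_inv', ← hdetS]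
    ring
  have htrC : (S * X⁻¹ * Sᵀ).trace = (X⁻¹ * B).trace := by
    rw [hSsymm, Matrix.trace_mul_cycle, hSS, Matrix.trace_mul_comm]
  have hlog : Real.log ((S * X⁻¹ * Sᵀ).det) = Real.log B.det - Real.log X.det := by
    rw [hdetC, Real.log_mul hB.det_pos.ne' (inv_ne_zero hXdet), Real.log_inv]
    ring
  rw [hlog, htrC] at h1
  exact h1

end aux

/-- Proposition 2.2, part 2: For `β > 0` and a real symmetric `p×p` matrix
`A = Q ⬝ diag(d) ⬝ Qᵀ` with `Q` orthogonal, the infimum over symmetric positive definite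
matrices `B` of `β * (-log det B) + (1/2) * ‖B - A‖²` equals
`-β * log det (φ⁺_β(A)) + (1/2) * ‖φ⁻_β(A)‖²`, and it is attained at `B = φ⁺_β(A)`. -/
theorem stmt3 {p : ℕ} (β : ℝ) (hβ : 0 < β)
    (A Q : Matrix (Fin p) (Fin p) ℝ) (d : Fin p → ℝ)
    (hA : A.IsSymm)
    (hQ : Q * Qᵀ = 1) (hQ' : Qᵀ * Q = 1)
    (hdecomp : A = Q * Matrix.diagonal d * Qᵀ)
    (Xplus Xminus : Matrix (Fin p) (Fin p) ℝ)
    (hXplus : Xplus =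
      Q * Matrix.diagonal (fun i => (Real.sqrt ((d i) ^ 2 + 4 * β) + d i) / 2) * Qᵀ)
    (hXminus : Xminus =
      Q * Matrix.diagonal (fun i => (Real.sqrt ((d i) ^ 2 + 4 * β) - d i) / 2) * Qᵀ) :
    Xplus.PosDef ∧
    β * (-Real.log Xplus.det) + (1 / 2) * ∑ i, ∑ j, (Xplus i j - A i j) ^ 2
      = -β * Real.log Xplus.det + (1 / 2) * ∑ i, ∑ j, (Xminus i j) ^ 2 ∧
    ∀ B : Matrix (Fin p) (Fin p) ℝ, B.PosDef →
      -β * Real.log Xplus.det + (1 / 2) * ∑ i, ∑ j, (Xminus i j) ^ 2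
        ≤ β * (-Real.log B.det) + (1 / 2) * ∑ i, ∑ j, (B i j - A i j) ^ 2 := by
  have hQdet : IsUnit Q.det := by
    refine IsUnit.of_mul_eq_one (a := Q.det) Qᵀ.det ?_
    rw [← Matrix.det_mul, hQ, Matrix.det_one]
  have hsq : ∀ i, |d i| < Real.sqrt ((d i) ^ 2 + 4 * β) := by
    intro i
    have h1 : Real.sqrt ((d i) ^ 2) < Real.sqrt ((d i) ^ 2 + 4 * β) :=
      Real.sqrt_lt_sqrt (sq_nonneg _) (by linarith)
    rwa [Real.sqrt_sq_eq_abs] at h1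
  have hplus_pos : ∀ i, 0 < (Real.sqrt ((d i) ^ 2 + 4 * β) + d i) / 2 := by
    intro i; have h1 := hsq i; have h2 := neg_abs_le (d i); linarith
  have hminus_pos : ∀ i, 0 < (Real.sqrt ((d i) ^ 2 + 4 * β) - d i) / 2 := by
    intro i; have h1 := hsq i; have h2 := le_abs_self (d i); linarith
  have hXP : Xplus.PosDef := by
    rw [hXplus]; exact posdef_conj (Matrix.PosDef.diagonal hplus_pos) hQdet
  have hXM : Xminus.PosDef := by
    rw [hXminus]; exact posdef_conj (Matrix.PosDef.diagonal hminus_pos) hQdet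
  have hEA : Xplus - A = Xminus := by
    have hfun : (fun i => (Real.sqrt ((d i) ^ 2 + 4 * β) + d i) / 2 - d i)
        = fun i => (Real.sqrt ((d i) ^ 2 + 4 * β) - d i) / 2 := by
      funext i; ring
    rw [hXplus, hXminus, hdecomp, ← Matrix.sub_mul, ← Matrix.mul_sub,
      Matrix.diagonal_sub, hfun]
  have hkey : Xplus * Xminus = β • (1 : Matrix (Fin p) (Fin p) ℝ) := by
    rw [hXplus, hXminus]
    simp only [Matrix.mul_assoc]
    rw [← Matrix.mul_assoc Qᵀ Q, hQ', Matrix.one_mul,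
      ← Matrix.mul_assoc (Matrix.diagonal _) (Matrix.diagonal _) Qᵀ,
      Matrix.diagonal_mul_diagonal]
    have hdd : (fun i => (Real.sqrt ((d i) ^ 2 + 4 * β) + d i) / 2 *
        ((Real.sqrt ((d i) ^ 2 + 4 * β) - d i) / 2)) = fun _ => β := by
      funext i
      have h0 : (0:ℝ) ≤ (d i) ^ 2 + 4 * β := by positivity
      have hs := Real.sq_sqrt h0
      nlinarith [hs]
    rw [hdd]
    have hβ1 : Matrix.diagonal (fun _ : Fin p => β) = β • (1 : Matrix (Fin p) (Fin p) ℝ) := by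
      ext i j
      by_cases h : i = j <;> simp [Matrix.diagonal, Matrix.one_apply, h]
    rw [hβ1, Matrix.smul_mul, Matrix.one_mul, Matrix.mul_smul, hQ]
  have hinv : Xplus⁻¹ = β⁻¹ • Xminus := by
    apply Matrix.inv_eq_right_inv
    rw [Matrix.mul_smul, hkey, smul_smul, inv_mul_cancel₀ hβ.ne', one_smul]
  have hMsymm : Xminusᵀ = Xminus := by
    have h := hXM.1
    rwa [Matrix.IsHermitian, Matrix.conjTranspose_eq_transpose_of_trivial] at h
  refine ⟨hXP, ?_, ?_⟩
  · have heq : ∀ i j, (Xplus i j - A i j) ^ 2 = (Xminus i j) ^ 2 := by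
      intro i j
      have h : Xplus i j - A i j = Xminus i j := by
        rw [← hEA]; simp [Matrix.sub_apply]
      rw [h]
    simp only [heq]
    try ring
  · intro B hB
    have hlog := logdet_ineq hXP hB
    have htr1 : β * (Xplus⁻¹ * B).trace = (Xminus * B).trace := by
      rw [hinv, Matrix.smul_mul, Matrix.trace_smul]
      rw [smul_eq_mul, ← mul_assoc, mul_inv_cancel₀ hβ.ne', one_mul]
    have htr2 : (Xminus * Xplus).trace = β * p := by
      rw [Matrix.trace_mul_comm, hkey, Matrix.trace_smul, Matrix.trace_one]
      simp [mul_comm]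
    have hBn : (0:ℝ) ≤ ∑ i, ∑ j, (B i j - Xplus i j) ^ 2 :=
      Finset.sum_nonneg fun i _ => Finset.sum_nonneg fun j _ => sq_nonneg _
    have hquad : ∑ i, ∑ j, (B i j - A i j) ^ 2
        = ∑ i, ∑ j, (B i j - Xplus i j) ^ 2
          + 2 * (Xminus * (B - Xplus)).trace + ∑ i, ∑ j, (Xminus i j) ^ 2 := by
      have hcross : ∑ i, ∑ j, (B - Xplus) i j * Xminus i j
          = (Xminus * (B - Xplus)).trace := by
        rw [frob_trace, hMsymm, Matrix.trace_mul_comm]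
      simp only [Matrix.sub_apply] at hcross
      have expand : ∀ i j, (B i j - A i j) ^ 2
          = (B i j - Xplus i j) ^ 2 + 2 * ((B i j - Xplus i j) * Xminus i j)
            + (Xminus i j) ^ 2 := by
        intro i j
        have h : Xminus i j = Xplus i j - A i j := by rw [← hEA]; simp [Matrix.sub_apply]
        rw [h]; ring
      simp only [expand]
      rw [← hcross]
      simp only [Finset.sum_add_distrib, Finset.mul_sum]
    have hlog2 : β * Real.log B.det - β * Real.log Xplus.det
        ≤ (Xminus * (B - Xplus)).trace := by
      have hm := mul_le_mul_of_nonneg_left hlog hβ.le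
      calc β * Real.log B.det - β * Real.log Xplus.det
          = β * (Real.log B.det - Real.log Xplus.det) := by ring
        _ ≤ β * ((Xplus⁻¹ * B).trace - p) := hm
        _ = (Xminus * B).trace - (Xminus * Xplus).trace := by
            rw [mul_sub, htr1, htr2]
        _ = (Xminus * (B - Xplus)).trace := by
            rw [Matrix.mul_sub, Matrix.trace_sub]
    rw [hquad]
    nlinarith [hBn]
end

section
/- Let σ > 0, let S and Z be real symmetric p×p matrices, and let Q·Diag(d₁,…,d_p)·Qᵀ be a spectral decomposition of Z − σ·S with Q orthogonal. Then φ⁺_σ(Z − σ·S) is the unique minimizer over symmetric positive definite p×p matrices B of the function B ↦ −log det(B) + ⟨S, B⟩ + (1/(2σ))‖B − Z‖². -/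
open Matrix

lemma sum_mul_eq_trace {n : ℕ} (M N : Matrix (Fin n) (Fin n) ℝ) :
    ∑ i, ∑ j, M i j * N i j = (Mᵀ * N).trace := by
  simp only [Matrix.trace, Matrix.diag, Matrix.mul_apply, Matrix.transpose_apply]
  exact Finset.sum_comm

lemma trace_eq_sum_eigs {n : ℕ} (M : Matrix (Fin n) (Fin n) ℝ) (hM : M.IsHermitian) :
    M.trace = ∑ i, hM.eigenvalues i := by
  conv_lhs => rw [hM.spectral_theorem]
  rw [Unitary.conjStarAlgAut_apply, Matrix.trace_mul_cycle, (Matrix.mem_unitaryGroup_iff'.mp (hM.eigenvectorUnitary).2),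
    one_mul, Matrix.trace_diagonal]
  simp

lemma log_det_le {n : ℕ} (M : Matrix (Fin n) (Fin n) ℝ) (hM : M.PosDef) :
    Real.log M.det ≤ M.trace - n := by
  have heig := hM.eigenvalues_pos
  rw [hM.1.det_eq_prod_eigenvalues, trace_eq_sum_eigs M hM.1]
  simp only [RCLike.ofReal_real_eq_id, id]
  rw [Real.log_prod (fun i _ => (heig i).ne')]
  have : ∀ i ∈ Finset.univ, Real.log (hM.1.eigenvalues i) ≤ hM.1.eigenvalues i - 1 :=
    fun i _ => Real.log_le_sub_one_of_pos (heig i)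
  calc ∑ i, Real.log (hM.1.eigenvalues i) ≤ ∑ i, (hM.1.eigenvalues i - 1) :=
        Finset.sum_le_sum this
    _ = (∑ i, hM.1.eigenvalues i) - n := by
        rw [Finset.sum_sub_distrib]; simp

lemma posDef_conj {n : ℕ} (A N N' : Matrix (Fin n) (Fin n) ℝ) (hA : A.PosDef)
    (h1 : N * N' = 1) : (N * A * Nᵀ).PosDef := by
  have hAt : Aᵀ = A := by
    have := hA.1
    rwa [Matrix.IsHermitian, Matrix.conjTranspose_eq_transpose_of_trivial] at this
  rw [Matrix.posDef_iff_dotProduct_mulVec]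
  constructor
  · rw [Matrix.IsHermitian, Matrix.conjTranspose_eq_transpose_of_trivial,
      Matrix.transpose_mul, Matrix.transpose_mul, Matrix.transpose_transpose, hAt,
      Matrix.mul_assoc]
  · intro x hx
    have hy : Nᵀ *ᵥ x ≠ 0 := by
      intro h
      apply hx
      have hinv : N'ᵀ *ᵥ (Nᵀ *ᵥ x) = x := by
        rw [Matrix.mulVec_mulVec, ← Matrix.transpose_mul, h1, Matrix.transpose_one,
          Matrix.one_mulVec]
      rw [h, Matrix.mulVec_zero] at hinv
      exact hinv.symm
    have hpos := hA.dotProduct_mulVec_pos hy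
    have : star x ⬝ᵥ (N * A * Nᵀ) *ᵥ x = star (Nᵀ *ᵥ x) ⬝ᵥ A *ᵥ (Nᵀ *ᵥ x) := by
      simp only [star_trivial]
      rw [← Matrix.mulVec_mulVec, ← Matrix.mulVec_mulVec, Matrix.dotProduct_mulVec,
        ← Matrix.mulVec_transpose]
    rw [this]
    exact hpos

/-- For `σ > 0`, symmetric matrices `S`, `Z`, and a spectral decomposition
`Z - σ•S = Q ⬝ diag(d) ⬝ Qᵀ` with `Q` orthogonal, the matrix `φ⁺_σ(Z - σ•S)` is the unique
minimizer over symmetric positive definite matrices `B` of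
`B ↦ -log det B + ⟨S, B⟩ + (1/(2σ)) * ‖B - Z‖²`. -/
theorem stmt4 {p : ℕ} (σ : ℝ) (hσ : 0 < σ)
    (S Z Q : Matrix (Fin p) (Fin p) ℝ) (d : Fin p → ℝ)
    (hS : S.IsSymm) (hZ : Z.IsSymm)
    (hQ : Q * Qᵀ = 1) (hQ' : Qᵀ * Q = 1)
    (hdecomp : Z - σ • S = Q * Matrix.diagonal d * Qᵀ)
    (Xstar : Matrix (Fin p) (Fin p) ℝ)
    (hXstar : Xstar =
      Q * Matrix.diagonal (fun i => (Real.sqrt ((d i) ^ 2 + 4 * σ) + d i) / 2) * Qᵀ) :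
    Xstar.PosDef ∧
    ∀ B : Matrix (Fin p) (Fin p) ℝ, B.PosDef → B ≠ Xstar →
      -Real.log Xstar.det + (∑ i, ∑ j, S i j * Xstar i j)
          + (1 / (2 * σ)) * ∑ i, ∑ j, (Xstar i j - Z i j) ^ 2
        < -Real.log B.det + (∑ i, ∑ j, S i j * B i j)
          + (1 / (2 * σ)) * ∑ i, ∑ j, (B i j - Z i j) ^ 2 := by
  obtain ⟨e, he_def⟩ : ∃ e : Fin p → ℝ,
      e = fun i => (Real.sqrt ((d i) ^ 2 + 4 * σ) + d i) / 2 := ⟨_, rfl⟩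
  rw [← he_def] at hXstar
  have he : ∀ i, 0 < e i := by
    intro i
    have h1 : Real.sqrt ((d i) ^ 2) < Real.sqrt ((d i) ^ 2 + 4 * σ) :=
      Real.sqrt_lt_sqrt (by positivity) (by linarith)
    have h2 : |d i| = Real.sqrt ((d i) ^ 2) := (Real.sqrt_sq_eq_abs _).symm
    have h3 := neg_abs_le (d i)
    rw [h2] at h3
    rw [he_def]
    simp only
    linarith
  have hene : ∀ i, e i ≠ 0 := fun i => (he i).ne'
  have hee : ∀ i, e i * (e i - d i) = σ := by
    intro i
    have hs : Real.sqrt ((d i) ^ 2 + 4 * σ) ^ 2 = (d i) ^ 2 + 4 * σ :=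
      Real.sq_sqrt (by positivity)
    rw [he_def]
    simp only
    linear_combination hs / 4
  -- conjugated product helper
  have hconj : ∀ a b : Fin p → ℝ,
      (Q * Matrix.diagonal a * Qᵀ) * (Q * Matrix.diagonal b * Qᵀ)
        = Q * Matrix.diagonal (fun i => a i * b i) * Qᵀ := by
    intro a b
    simp only [Matrix.mul_assoc]
    rw [← Matrix.mul_assoc Qᵀ Q, hQ', Matrix.one_mul,
      ← Matrix.mul_assoc (Matrix.diagonal a) (Matrix.diagonal b),
      Matrix.diagonal_mul_diagonal]
  have hQdiag_one : ∀ a : Fin p → ℝ, (∀ i, a i = 1) →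
      Q * Matrix.diagonal a * Qᵀ = 1 := by
    intro a ha
    have : Matrix.diagonal a = 1 := by
      rw [show a = fun _ => (1 : ℝ) from funext ha, Matrix.diagonal_one]
    rw [this, Matrix.mul_one, hQ]
  have hXPD : Xstar.PosDef := by
    rw [hXstar]
    exact posDef_conj _ Q Qᵀ (Matrix.PosDef.diagonal he) hQ
  refine ⟨hXPD, ?_⟩
  intro B hB hBne
  have hXt : Xstarᵀ = Xstar := by
    have := hXPD.1
    rwa [Matrix.IsHermitian, Matrix.conjTranspose_eq_transpose_of_trivial] at this
  have hBt : Bᵀ = B := by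
    have := hB.1
    rwa [Matrix.IsHermitian, Matrix.conjTranspose_eq_transpose_of_trivial] at this
  -- the inverse of Xstar
  obtain ⟨Y, hY_def⟩ : ∃ Y : Matrix (Fin p) (Fin p) ℝ,
      Y = Q * Matrix.diagonal (fun i => (e i)⁻¹) * Qᵀ := ⟨_, rfl⟩
  have hXY : Xstar * Y = 1 := by
    rw [hXstar, hY_def, hconj]
    exact hQdiag_one _ fun i => mul_inv_cancel₀ (hene i)
  have hYX : Y * Xstar = 1 := by
    rw [hXstar, hY_def, hconj]
    exact hQdiag_one _ fun i => inv_mul_cancel₀ (hene i)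
  -- stationarity : σ • Y = Xstar - (Z - σ • S)
  have hstat : σ • Y = Xstar - (Z - σ • S) := by
    rw [hY_def, hXstar, hdecomp]
    have h1 : σ • (Q * Matrix.diagonal (fun i => (e i)⁻¹) * Qᵀ)
        = Q * Matrix.diagonal (fun i => σ * (e i)⁻¹) * Qᵀ := by
      rw [← Matrix.smul_mul, ← Matrix.mul_smul, ← Matrix.diagonal_smul]
      rfl
    have h2 : (fun i => σ * (e i)⁻¹) = fun i => e i - d i := by
      funext i
      rw [← hee i, mul_comm (e i) (e i - d i), mul_assoc, mul_inv_cancel₀ (hene i), mul_one]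
    have h3 : Q * Matrix.diagonal e * Qᵀ - Q * Matrix.diagonal d * Qᵀ
        = Q * Matrix.diagonal (fun i => e i - d i) * Qᵀ := by
      rw [← Matrix.sub_mul, ← Matrix.mul_sub, Matrix.diagonal_sub]
    rw [h1, h2, h3]
  -- square root of the inverse
  obtain ⟨Rinv, hRinv_def⟩ : ∃ R' : Matrix (Fin p) (Fin p) ℝ,
      R' = Q * Matrix.diagonal (fun i => (Real.sqrt (e i))⁻¹) * Qᵀ := ⟨_, rfl⟩
  obtain ⟨R, hR_def⟩ : ∃ R : Matrix (Fin p) (Fin p) ℝ,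
      R = Q * Matrix.diagonal (fun i => Real.sqrt (e i)) * Qᵀ := ⟨_, rfl⟩
  have hsqrt_pos : ∀ i, 0 < Real.sqrt (e i) := fun i => Real.sqrt_pos.mpr (he i)
  have hRinvR : Rinv * R = 1 := by
    rw [hRinv_def, hR_def, hconj]
    exact hQdiag_one _ fun i => inv_mul_cancel₀ (hsqrt_pos i).ne'
  have hRinv2 : Rinv * Rinv = Y := by
    have hfun : (fun i => (Real.sqrt (e i))⁻¹ * (Real.sqrt (e i))⁻¹)
        = fun i => (e i)⁻¹ := by
      funext i
      rw [← mul_inv, Real.mul_self_sqrt (he i).le]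
    rw [hRinv_def, hY_def, hconj, hfun]
  have hRinvT : Rinvᵀ = Rinv := by
    rw [hRinv_def, Matrix.transpose_mul, Matrix.transpose_mul, Matrix.transpose_transpose,
      Matrix.diagonal_transpose, Matrix.mul_assoc]
  -- the conjugated matrix M
  obtain ⟨M, hM_def⟩ : ∃ M : Matrix (Fin p) (Fin p) ℝ, M = Rinv * B * Rinv := ⟨_, rfl⟩
  have hMPD : M.PosDef := by
    rw [hM_def]
    have := posDef_conj B Rinv R hB hRinvR
    rwa [hRinvT] at this
  have hdetX : 0 < Xstar.det := hXPD.det_pos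
  have hdetB : 0 < B.det := hB.det_pos
  have hdetY : Y.det = Xstar.det⁻¹ := by
    have h := congrArg Matrix.det hXY
    rw [Matrix.det_mul, Matrix.det_one] at h
    field_simp
    linear_combination h
  have hdetYpos : 0 < Y.det := by rw [hdetY]; positivity
  have hdetRR : Rinv.det * Rinv.det = Y.det := by rw [← Matrix.det_mul, hRinv2]
  have hdetM : M.det = Y.det * B.det := by
    rw [hM_def, Matrix.det_mul, Matrix.det_mul, ← hdetRR]
    ring
  have htrM : M.trace = (Y * B).trace := by
    rw [hM_def, Matrix.trace_mul_cycle, hRinv2]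
  -- key log-det inequality
  have hkey : Real.log B.det - Real.log Xstar.det ≤ (Y * B).trace - p := by
    have h := log_det_le M hMPD
    rw [hdetM, htrM, Real.log_mul hdetYpos.ne' hdetB.ne', hdetY, Real.log_inv] at h
    linarith
  obtain ⟨C, hC_def⟩ : ∃ C : Matrix (Fin p) (Fin p) ℝ, C = B - Xstar := ⟨_, rfl⟩
  obtain ⟨W, hW_def⟩ : ∃ W : Matrix (Fin p) (Fin p) ℝ, W = Xstar - Z := ⟨_, rfl⟩
  have hCne : C ≠ 0 := by rw [hC_def]; exact sub_ne_zero_of_ne hBne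
  have hWt : Wᵀ = W := by rw [hW_def, Matrix.transpose_sub, hXt, hZ]
  -- trace identity: (Y*B).trace - p = (S*C).trace + σ⁻¹ * (W*C).trace
  have htr1 : (Y * B).trace - (p : ℝ) = (S * C).trace + σ⁻¹ * (W * C).trace := by
    have hY2 : Y = S + σ⁻¹ • W := by
      have h := congrArg (fun X : Matrix (Fin p) (Fin p) ℝ => σ⁻¹ • X) hstat
      rw [smul_smul, inv_mul_cancel₀ hσ.ne', one_smul] at h
      rw [h, hW_def, smul_sub, smul_sub, smul_sub, smul_smul, inv_mul_cancel₀ hσ.ne', one_smul]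
      abel
    have hsplit : Y * C = S * C + σ⁻¹ • (W * C) := by
      rw [hY2, Matrix.add_mul, Matrix.smul_mul]
    have hYC : (Y * C).trace = (Y * B).trace - (p : ℝ) := by
      rw [hC_def, Matrix.mul_sub, Matrix.trace_sub, hYX, Matrix.trace_one]
      simp
    rw [← hYC, hsplit, Matrix.trace_add, Matrix.trace_smul, smul_eq_mul]
  -- quadratic expansion
  have hcross : (Cᵀ * W).trace = (Wᵀ * C).trace := by
    rw [← Matrix.trace_transpose (Cᵀ * W), Matrix.transpose_mul, Matrix.transpose_transpose]
  have hquad : ((B - Z)ᵀ * (B - Z)).trace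
      = ((Xstar - Z)ᵀ * (Xstar - Z)).trace + (Cᵀ * C).trace + 2 * (W * C).trace := by
    rw [show B - Z = C + W by rw [hC_def, hW_def]; abel]
    rw [Matrix.transpose_add, Matrix.add_mul, Matrix.mul_add, Matrix.mul_add,
      Matrix.trace_add, Matrix.trace_add, Matrix.trace_add, hcross, ← hW_def, hWt]
    ring
  -- S-part identity
  have hSid : (Sᵀ * B).trace = (Sᵀ * Xstar).trace + (S * C).trace := by
    rw [hC_def, Matrix.mul_sub, Matrix.trace_sub, hS]
    ring
  -- strict positivity of (Cᵀ * C).trace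
  have hCpos : 0 < (Cᵀ * C).trace := by
    rw [← sum_mul_eq_trace]
    obtain ⟨i, j, hij⟩ : ∃ i j, C i j ≠ 0 := by
      by_contra h
      push_neg at h
      exact hCne (by ext i j; simpa using h i j)
    apply Finset.sum_pos' (fun i _ => Finset.sum_nonneg fun j _ => mul_self_nonneg _)
    refine ⟨i, Finset.mem_univ i, ?_⟩
    apply Finset.sum_pos' (fun j _ => mul_self_nonneg _)
    exact ⟨j, Finset.mem_univ j, mul_self_pos.mpr hij⟩
  -- convert the sums in the goal to traces
  have hsq : ∀ T : Matrix (Fin p) (Fin p) ℝ,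
      ∑ i, ∑ j, (T i j - Z i j) ^ 2 = ((T - Z)ᵀ * (T - Z)).trace := by
    intro T
    rw [← sum_mul_eq_trace]
    simp [Matrix.sub_apply, sq]
  rw [sum_mul_eq_trace S Xstar, sum_mul_eq_trace S B, hsq Xstar, hsq B, hquad, hSid]
  have e1 : 1 / (2 * σ) * (((Xstar - Z)ᵀ * (Xstar - Z)).trace + (Cᵀ * C).trace
      + 2 * (W * C).trace)
      = 1 / (2 * σ) * ((Xstar - Z)ᵀ * (Xstar - Z)).trace
        + 1 / (2 * σ) * (Cᵀ * C).trace + σ⁻¹ * (W * C).trace := by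
    field_simp
  rw [e1]
  have e2 : 0 < 1 / (2 * σ) * (Cᵀ * C).trace := by positivity
  have hkey2 : Real.log B.det - Real.log Xstar.det
      ≤ (S * C).trace + σ⁻¹ * (W * C).trace := by
    rw [← htr1]; exact hkey
  linarith
end

section
/- (Proposition 2.3.) Let β > 0. The map φ⁺_β, defined on real symmetric p×p matrices by φ⁺_β(A) = (1/2)(A + (A² + 4β·I)^{1/2}) where (·)^{1/2} is the positive semidefinite matrix square root, is Fréchet differentiable at every symmetric A. Moreover, if A = Q·Diag(d₁,…,d_p)·Qᵀ with Q orthogonal, then the derivative of φ⁺_β at A applied to a symmetric matrix B is (φ⁺_β)′(A)[B] = Q·(Γ ⊙ (Qᵀ B Q))·Qᵀ, where ⊙ denotes the Hadamard (entrywise) product and Γ is the symmetric matrix with entries Γ_{ij} = (φ⁺_β(d_i) + φ⁺_β(d_j)) / (√(d_i² + 4β) + √(d_j² + 4β)). -/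
open Matrix
open scoped Matrix

attribute [local instance] Matrix.frobeniusNormedAddCommGroup Matrix.frobeniusNormedSpace

open Classical in
/-- The positive semidefinite square root of a matrix (junk value `0` if the matrix is not
positive semidefinite). -/
noncomputable def matSqrt {p : ℕ} (M : Matrix (Fin p) (Fin p) ℝ) : Matrix (Fin p) (Fin p) ℝ :=
  if h : M.PosSemidef then
    (h.1.eigenvectorUnitary : Matrix (Fin p) (Fin p) ℝ) * diagonal (Real.sqrt ∘ h.1.eigenvalues) *
      (star h.1.eigenvectorUnitary : Matrix (Fin p) (Fin p) ℝ)
  else 0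

/-- `φ⁺_β(A) = (1/2)(A + (A² + 4β·I)^{1/2})`. -/
noncomputable def phiPlusMat {p : ℕ} (β : ℝ) (A : Matrix (Fin p) (Fin p) ℝ) :
    Matrix (Fin p) (Fin p) ℝ :=
  (1 / 2 : ℝ) • (A + matSqrt (A * A + (4 * β) • (1 : Matrix (Fin p) (Fin p) ℝ)))

/-- The submodule of real symmetric `p×p` matrices. -/
def symMat (p : ℕ) : Submodule ℝ (Matrix (Fin p) (Fin p) ℝ) where
  carrier := {A | A.IsSymm}
  add_mem' := fun ha hb => ha.add hb
  zero_mem' := Matrix.isSymm_zero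
  smul_mem' := fun c _ hA => hA.smul c

/-! ### scalar lemmas -/

noncomputable def fphi (β x : ℝ) : ℝ := (Real.sqrt (x ^ 2 + 4 * β) + x) / 2

lemma sq_add_pos {β : ℝ} (hβ : 0 < β) (x : ℝ) : 0 < x ^ 2 + 4 * β := by positivity

lemma sqrt_sq_add {β : ℝ} (hβ : 0 < β) (x : ℝ) :
    Real.sqrt (x ^ 2 + 4 * β) ^ 2 = x ^ 2 + 4 * β :=
  Real.sq_sqrt (sq_add_pos hβ x).le

lemma fphi_pos {β : ℝ} (hβ : 0 < β) (x : ℝ) : 0 < fphi β x := by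
  have h : -x < Real.sqrt (x ^ 2 + 4 * β) := by
    nlinarith [Real.sqrt_nonneg (x ^ 2 + 4 * β), sqrt_sq_add hβ x]
  unfold fphi; linarith

lemma fphi_mul {β : ℝ} (hβ : 0 < β) (x : ℝ) : fphi β x * (fphi β x - x) = β := by
  have := sqrt_sq_add hβ x
  unfold fphi; nlinarith

lemma sqrt_eq_two_fphi {β : ℝ} (hβ : 0 < β) (x : ℝ) :
    Real.sqrt (x ^ 2 + 4 * β) = 2 * fphi β x - x := by
  unfold fphi; ring

lemma fphi_sub_inv {β : ℝ} (hβ : 0 < β) (x : ℝ) :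
    fphi β x - β * (fphi β x)⁻¹ = x := by
  have h1 := fphi_mul hβ x
  have h2 := (fphi_pos hβ x).ne'
  field_simp
  nlinarith

/-- the key scalar identity for the derivative coefficients -/
lemma gamma_mul_tau {β : ℝ} (hβ : 0 < β) (x y : ℝ) :
    ((Real.sqrt (x ^ 2 + 4 * β) + x) / 2 + (Real.sqrt (y ^ 2 + 4 * β) + y) / 2)
        / (Real.sqrt (x ^ 2 + 4 * β) + Real.sqrt (y ^ 2 + 4 * β))
      * (1 + β * ((fphi β x)⁻¹ * (fphi β y)⁻¹)) = 1 := by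
  have hx := fphi_pos hβ x
  have hy := fphi_pos hβ y
  have hsx := sqrt_eq_two_fphi hβ x
  have hsy := sqrt_eq_two_fphi hβ y
  have hbx := fphi_mul hβ x
  have hby := fphi_mul hβ y
  have hnum : (Real.sqrt (x ^ 2 + 4 * β) + x) / 2 = fphi β x := by unfold fphi; ring
  have hnum' : (Real.sqrt (y ^ 2 + 4 * β) + y) / 2 = fphi β y := by unfold fphi; ring
  rw [hnum, hnum', hsx, hsy]
  have hden : 0 < 2 * fphi β x - x + (2 * fphi β y - y) := by
    nlinarith [Real.sqrt_nonneg (x^2+4*β), Real.sqrt_pos.2 (sq_add_pos hβ x),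
      Real.sqrt_pos.2 (sq_add_pos hβ y), hsx, hsy]
  have hden' := hden.ne'
  field_simp
  rw [div_eq_iff (by linarith)]
  nlinarith [hbx, hby, mul_pos hx hy]


variable {p : ℕ}

local notation "Mat" => Matrix (Fin p) (Fin p) ℝ

/-! ### conjugation toolkit -/

lemma conj_mul_conj (P : Mat) (hP' : Pᵀ * P = 1) (e f : Fin p → ℝ) :
    (P * diagonal e * Pᵀ) * (P * diagonal f * Pᵀ)
      = P * diagonal (fun i => e i * f i) * Pᵀ := by
  have : diagonal e * (Pᵀ * P) * diagonal f = diagonal fun i => e i * f i := by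
    rw [hP', mul_one, diagonal_mul_diagonal]
  calc (P * diagonal e * Pᵀ) * (P * diagonal f * Pᵀ)
      = P * (diagonal e * (Pᵀ * P) * diagonal f) * Pᵀ := by
        simp only [Matrix.mul_assoc]
    _ = P * diagonal (fun i => e i * f i) * Pᵀ := by rw [this]

lemma conj_isSymm (P : Mat) (e : Fin p → ℝ) : (P * diagonal e * Pᵀ).IsSymm := by
  unfold Matrix.IsSymm
  rw [transpose_mul, transpose_mul, transpose_transpose, diagonal_transpose, Matrix.mul_assoc]

lemma conj_add (P : Mat) (e f : Fin p → ℝ) :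
    P * diagonal e * Pᵀ + P * diagonal f * Pᵀ = P * diagonal (fun i => e i + f i) * Pᵀ := by
  rw [← diagonal_add, ← Matrix.add_mul, ← Matrix.mul_add]

lemma conj_smul (P : Mat) (c : ℝ) (e : Fin p → ℝ) :
    c • (P * diagonal e * Pᵀ) = P * diagonal (fun i => c * e i) * Pᵀ := by
  have h : diagonal (fun i => c * e i) = c • diagonal e := by
    rw [← diagonal_smul]; rfl
  rw [h, Matrix.mul_smul, Matrix.smul_mul]

lemma conj_one (P : Mat) (hP : P * Pᵀ = 1) :
    P * diagonal (fun _ => (1:ℝ)) * Pᵀ = 1 := by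
  rw [diagonal_one, mul_one, hP]

lemma conj_posSemidef (P : Mat) (e : Fin p → ℝ) (he : ∀ i, 0 ≤ e i) :
    (P * diagonal e * Pᵀ).PosSemidef := by
  have := (posSemidef_diagonal_iff.2 he : (diagonal e).PosSemidef).mul_mul_conjTranspose_same P
  rwa [conjTranspose_eq_transpose_of_trivial] at this

lemma conj_inverse (P : Mat) (hP : P * Pᵀ = 1) (hP' : Pᵀ * P = 1) (e : Fin p → ℝ)
    (he : ∀ i, e i ≠ 0) :
    (P * diagonal e * Pᵀ)⁻¹ = P * diagonal (fun i => (e i)⁻¹) * Pᵀ := by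
  apply Matrix.inv_eq_right_inv
  rw [conj_mul_conj P hP']
  have : (fun i => e i * (e i)⁻¹) = fun _ => (1:ℝ) := by
    funext i; exact mul_inv_cancel₀ (he i)
  rw [this, conj_one P hP]

/-- real spectral theorem, symmetric version -/
lemma isSymm_spectral {C : Mat} (hC : C.IsSymm) :
    ∃ (P : Mat) (e : Fin p → ℝ), P * Pᵀ = 1 ∧ Pᵀ * P = 1 ∧ C = P * diagonal e * Pᵀ := by
  have hH : C.IsHermitian := by
    rw [Matrix.IsHermitian, conjTranspose_eq_transpose_of_trivial]; exact hC
  refine ⟨hH.eigenvectorUnitary, hH.eigenvalues, ?_, ?_, ?_⟩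
  · have := (mem_unitaryGroup_iff.mp hH.eigenvectorUnitary.2)
    rwa [star_eq_conjTranspose, conjTranspose_eq_transpose_of_trivial] at this
  · have := (mem_unitaryGroup_iff'.mp hH.eigenvectorUnitary.2)
    rwa [star_eq_conjTranspose, conjTranspose_eq_transpose_of_trivial] at this
  · have := hH.spectral_theorem
    rwa [Unitary.conjStarAlgAut_apply, star_eq_conjTranspose,
      conjTranspose_eq_transpose_of_trivial,
      show (RCLike.ofReal ∘ hH.eigenvalues : Fin p → ℝ) = hH.eigenvalues from rfl] at this

/-! ### matSqrt and phiPlusMat on conjugated diagonals -/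

open scoped MatrixOrder in
lemma matSqrt_conj (P : Mat) (hP : P * Pᵀ = 1) (hP' : Pᵀ * P = 1) (f : Fin p → ℝ)
    (hf : ∀ i, 0 ≤ f i) :
    matSqrt (P * diagonal f * Pᵀ) = P * diagonal (fun i => Real.sqrt (f i)) * Pᵀ := by
  have hPSD := conj_posSemidef P f hf
  have hR := conj_posSemidef P (fun i => Real.sqrt (f i)) (fun i => Real.sqrt_nonneg (f i))
  have hsq : (P * diagonal (fun i => Real.sqrt (f i)) * Pᵀ) ^ 2 = P * diagonal f * Pᵀ := by
    have hff : (fun i => Real.sqrt (f i) * Real.sqrt (f i)) = f :=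
      funext fun i => Real.mul_self_sqrt (hf i)
    rw [pow_two, conj_mul_conj P hP', hff]
  rw [matSqrt, dif_pos hPSD]
  have e1 : (hPSD.1.eigenvectorUnitary : Mat) * diagonal (Real.sqrt ∘ hPSD.1.eigenvalues)
      * (star hPSD.1.eigenvectorUnitary : Mat) = CFC.sqrt (P * diagonal f * Pᵀ) := by
    rw [CFC.sqrt_eq_cfc, cfc_nnreal_eq_real _ _ hPSD.nonneg, hPSD.1.cfc_eq]
    simp only [IsHermitian.cfc, Unitary.conjStarAlgAut_apply]
    congr 3
    funext i
    simp [hPSD.eigenvalues_nonneg i]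
  rw [e1, CFC.sqrt_eq_iff _ _ hPSD.nonneg hR.nonneg, ← pow_two]
  exact hsq

lemma phiPlusMat_conj {β : ℝ} (hβ : 0 < β) (P : Mat) (hP : P * Pᵀ = 1) (hP' : Pᵀ * P = 1)
    (e : Fin p → ℝ) :
    phiPlusMat β (P * diagonal e * Pᵀ) = P * diagonal (fun i => fphi β (e i)) * Pᵀ := by
  have h1 : (P * diagonal e * Pᵀ) * (P * diagonal e * Pᵀ) + (4 * β) • (1 : Mat)
      = P * diagonal (fun i => e i ^ 2 + 4 * β) * Pᵀ := by
    rw [conj_mul_conj P hP', ← conj_one P hP, conj_smul, conj_add]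
    congr 2
    funext i j; simp only [diagonal_apply]; split_ifs <;> ring
  unfold phiPlusMat
  rw [h1, matSqrt_conj P hP hP' _ (fun i => (sq_add_pos hβ (e i)).le), conj_add, conj_smul]
  have hfe : (fun i => 1 / 2 * (e i + Real.sqrt (e i ^ 2 + 4 * β)))
      = fun i => fphi β (e i) := funext fun i => by unfold fphi; ring
  rw [hfe]

/-! ### positive definiteness (bespoke predicate) -/

def symPD {q : ℕ} (N : Matrix (Fin q) (Fin q) ℝ) : Prop :=
  N.IsSymm ∧ ∀ x : Fin q → ℝ, x ≠ 0 → 0 < x ⬝ᵥ N *ᵥ x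

lemma conj_mulVec (P : Mat) (e : Fin p → ℝ) (x : Fin p → ℝ) :
    x ⬝ᵥ (P * diagonal e * Pᵀ) *ᵥ x = ∑ i, e i * (Pᵀ *ᵥ x) i ^ 2 := by
  rw [← Matrix.mulVec_mulVec, ← Matrix.mulVec_mulVec, Matrix.dotProduct_mulVec,
    ← Matrix.mulVec_transpose]
  simp only [dotProduct, Matrix.mulVec_diagonal]
  exact Finset.sum_congr rfl fun i _ => by ring

lemma orth_dot (P : Mat) (hP : P * Pᵀ = 1) (x : Fin p → ℝ) :
    (Pᵀ *ᵥ x) ⬝ᵥ (Pᵀ *ᵥ x) = x ⬝ᵥ x := by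
  rw [Matrix.dotProduct_mulVec, Matrix.vecMul_transpose, Matrix.mulVec_mulVec, hP,
    Matrix.one_mulVec]

lemma orth_mulVec_ne_zero (P : Mat) (hP : P * Pᵀ = 1) {x : Fin p → ℝ} (hx : x ≠ 0) :
    Pᵀ *ᵥ x ≠ 0 := by
  intro h
  apply hx
  have : P *ᵥ (Pᵀ *ᵥ x) = x := by rw [Matrix.mulVec_mulVec, hP, Matrix.one_mulVec]
  rw [h, Matrix.mulVec_zero] at this
  exact this.symm

lemma conj_symPD (P : Mat) (hP : P * Pᵀ = 1) (e : Fin p → ℝ) (he : ∀ i, 0 < e i) :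
    symPD (P * diagonal e * Pᵀ) := by
  refine ⟨conj_isSymm P e, fun x hx => ?_⟩
  rw [conj_mulVec]
  have hy := orth_mulVec_ne_zero P hP hx
  obtain ⟨j, hj⟩ := Function.ne_iff.1 hy
  have : ∀ i ∈ Finset.univ, (0:ℝ) ≤ e i * (Pᵀ *ᵥ x) i ^ 2 :=
    fun i _ => mul_nonneg (he i).le (sq_nonneg _)
  refine Finset.sum_pos' this ⟨j, Finset.mem_univ j, ?_⟩
  have hj' : (Pᵀ *ᵥ x) j ≠ 0 := hj
  exact mul_pos (he j) (pow_two_pos_of_ne_zero hj')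

lemma symPD_diag_pos (P : Mat) (hP : P * Pᵀ = 1) (hP' : Pᵀ * P = 1) (e : Fin p → ℝ)
    (h : symPD (P * diagonal e * Pᵀ)) : ∀ i, 0 < e i := by
  intro i
  set x := P *ᵥ Pi.single i 1 with hxdef
  have hPx : Pᵀ *ᵥ x = Pi.single i 1 := by
    rw [hxdef, Matrix.mulVec_mulVec, hP', Matrix.one_mulVec]
  have hx : x ≠ 0 := by
    intro h0
    have : (Pi.single i 1 : Fin p → ℝ) i = 0 := by
      rw [← hPx, h0, Matrix.mulVec_zero]; rfl
    simp at this
  have := h.2 x hx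
  rw [conj_mulVec, hPx] at this
  have hsum : ∑ j, e j * (Pi.single i 1 : Fin p → ℝ) j ^ 2 = e i := by
    rw [Finset.sum_eq_single i]
    · simp
    · intro b _ hb; simp [Pi.single_apply, hb]
    · intro hmem; exact absurd (Finset.mem_univ i) hmem
  rwa [hsum] at this

/-! ### properties of phiPlusMat on symmetric matrices -/

lemma conj_sub (P : Mat) (e f : Fin p → ℝ) :
    P * diagonal e * Pᵀ - P * diagonal f * Pᵀ = P * diagonal (fun i => e i - f i) * Pᵀ := by
  rw [← diagonal_sub, ← Matrix.sub_mul, ← Matrix.mul_sub]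

lemma phi_isSymm {β : ℝ} (hβ : 0 < β) {C : Mat} (hC : C.IsSymm) :
    (phiPlusMat β C).IsSymm := by
  obtain ⟨P, e, hP, hP', rfl⟩ := isSymm_spectral hC
  rw [phiPlusMat_conj hβ P hP hP']
  exact conj_isSymm P _

lemma phi_symPD {β : ℝ} (hβ : 0 < β) {C : Mat} (hC : C.IsSymm) :
    symPD (phiPlusMat β C) := by
  obtain ⟨P, e, hP, hP', rfl⟩ := isSymm_spectral hC
  rw [phiPlusMat_conj hβ P hP hP']
  exact conj_symPD P hP _ fun i => fphi_pos hβ (e i)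

lemma phi_psi {β : ℝ} (hβ : 0 < β) {C : Mat} (hC : C.IsSymm) :
    phiPlusMat β C - β • (phiPlusMat β C)⁻¹ = C := by
  obtain ⟨P, e, hP, hP', rfl⟩ := isSymm_spectral hC
  rw [phiPlusMat_conj hβ P hP hP',
    conj_inverse P hP hP' _ (fun i => (fphi_pos hβ (e i)).ne'), conj_smul, conj_sub]
  rw [show (fun i => fphi β (e i) - β * (fphi β (e i))⁻¹) = e from
    funext fun i => fphi_sub_inv hβ (e i)]

/-! ### trace lemmas -/

lemma trace_mul_transpose_self (U : Mat) :
    (U * Uᵀ).trace = ∑ i, ∑ j, (U i j) ^ 2 := by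
  simp only [Matrix.trace, Matrix.diag, Matrix.mul_apply, Matrix.transpose_apply, sq]

lemma trace_mul_transpose_self_nonneg (U : Mat) : 0 ≤ (U * Uᵀ).trace := by
  rw [trace_mul_transpose_self]
  exact Finset.sum_nonneg fun i _ => Finset.sum_nonneg fun j _ => sq_nonneg _

/-! ### injectivity of `S ↦ S - β S⁻¹` on positive definite symmetric matrices -/

lemma symPD_inv_facts {S : Mat} (hS : symPD S) :
    S * S⁻¹ = 1 ∧ S⁻¹ * S = 1 ∧ ∃ X : Mat, X.IsSymm ∧ X * X = S⁻¹ := by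
  obtain ⟨P, e, hP, hP', hSd⟩ := isSymm_spectral hS.1
  have he : ∀ i, 0 < e i := symPD_diag_pos P hP hP' e (hSd ▸ hS)
  have hinv : S⁻¹ = P * diagonal (fun i => (e i)⁻¹) * Pᵀ := by
    rw [hSd]; exact conj_inverse P hP hP' e fun i => (he i).ne'
  refine ⟨?_, ?_, ?_⟩
  · rw [hinv, hSd, conj_mul_conj P hP']
    have h1 : (fun i => e i * (e i)⁻¹) = fun _ => (1:ℝ) :=
      funext fun i => mul_inv_cancel₀ (he i).ne'
    rw [h1, conj_one P hP]
  · rw [hinv, hSd, conj_mul_conj P hP']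
    have h1 : (fun i => (e i)⁻¹ * e i) = fun _ => (1:ℝ) :=
      funext fun i => inv_mul_cancel₀ (he i).ne'
    rw [h1, conj_one P hP]
  · refine ⟨P * diagonal (fun i => Real.sqrt (e i)⁻¹) * Pᵀ, conj_isSymm P _, ?_⟩
    rw [conj_mul_conj P hP', hinv,
      show (fun i => Real.sqrt (e i)⁻¹ * Real.sqrt (e i)⁻¹) = fun i => (e i)⁻¹ from
        funext fun i => Real.mul_self_sqrt (inv_nonneg.2 (he i).le)]

lemma psi_inj {β : ℝ} (hβ : 0 < β) {S T : Mat} (hS : symPD S) (hT : symPD T)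
    (h : S - β • S⁻¹ = T - β • T⁻¹) : S = T := by
  obtain ⟨hS1, hS2, X, hXsymm, hXX⟩ := symPD_inv_facts hS
  obtain ⟨hT1, hT2, Y, hYsymm, hYY⟩ := symPD_inv_facts hT
  set D := S - T with hDdef
  have hDsymm : D.IsSymm := hS.1.sub hT.1
  have hinvdiff : S⁻¹ * (T - S) * T⁻¹ = S⁻¹ - T⁻¹ := by
    rw [Matrix.mul_sub, hS2, Matrix.sub_mul, Matrix.one_mul, Matrix.mul_assoc, hT1, mul_one]
  have hD : D = β • (S⁻¹ - T⁻¹) := by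
    rw [smul_sub]
    calc S - T = S - β • S⁻¹ - (T - β • T⁻¹) + (β • S⁻¹ - β • T⁻¹) := by abel
    _ = β • S⁻¹ - β • T⁻¹ := by rw [h]; abel
  have hTS : T - S = -D := by rw [hDdef, neg_sub]
  have hD2 : D = (-β) • (S⁻¹ * D * T⁻¹) :=
    calc D = β • (S⁻¹ - T⁻¹) := hD
    _ = β • (S⁻¹ * (T - S) * T⁻¹) := by rw [hinvdiff]
    _ = β • (S⁻¹ * (-D) * T⁻¹) := by rw [hTS]
    _ = (-β) • (S⁻¹ * D * T⁻¹) := by rw [Matrix.mul_neg, Matrix.neg_mul, smul_neg, neg_smul]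
  have hD3 : D = (-β) • (X * X * D * (Y * Y)) := by
    rw [← hXX, ← hYY] at hD2; exact hD2
  set V := X * D * Y with hVdef
  have hVt : Vᵀ = Y * D * X := by
    rw [hVdef, Matrix.transpose_mul, Matrix.transpose_mul, hXsymm.eq, hYsymm.eq, hDsymm.eq,
      Matrix.mul_assoc]
  have hkey : (D * (X * X * D * (Y * Y))).trace = (V * Vᵀ).trace := by
    have h1 : D * (X * X * D * (Y * Y)) = (D * X) * (X * D * Y * Y) := by
      simp only [Matrix.mul_assoc]
    have h2 : (X * D * Y * Y) * (D * X) = V * Vᵀ := by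
      rw [hVt, hVdef]; simp only [Matrix.mul_assoc]
    rw [h1, Matrix.trace_mul_comm, h2]
  have htr : (D * D).trace = (-β) * (V * Vᵀ).trace := by
    conv_lhs => rw [show D * D = D * ((-β) • (X * X * D * (Y * Y))) from by rw [← hD3]]
    rw [Matrix.mul_smul, Matrix.trace_smul, smul_eq_mul, hkey]
  have hDD : (D * D).trace = ∑ i, ∑ j, (D i j) ^ 2 := by
    rw [show D * D = D * Dᵀ from by rw [hDsymm.eq], trace_mul_transpose_self]
  have hnn := trace_mul_transpose_self_nonneg V
  have hzero : ∑ i, ∑ j, (D i j) ^ 2 = 0 := by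
    have hle : (D * D).trace ≤ 0 := by
      rw [htr]; exact mul_nonpos_of_nonpos_of_nonneg (by linarith) hnn
    have hge : 0 ≤ ∑ i, ∑ j, (D i j) ^ 2 :=
      Finset.sum_nonneg fun i _ => Finset.sum_nonneg fun j _ => sq_nonneg _
    rw [hDD] at hle
    linarith
  have hD0 : D = 0 := by
    ext i j
    have h1 := (Finset.sum_eq_zero_iff_of_nonneg
      (fun i _ => Finset.sum_nonneg fun j _ => sq_nonneg (D i j))).1 hzero i (Finset.mem_univ i)
    have h2 := (Finset.sum_eq_zero_iff_of_nonneg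
      (fun j _ => sq_nonneg (D i j))).1 h1 j (Finset.mem_univ j)
    simpa using pow_eq_zero_iff (n := 2) (by norm_num) |>.1 h2
  have := sub_eq_zero.1 hD0
  exact this

/-! ### quadratic form bounds (Frobenius norm) -/

lemma dot_self_eq (x : Fin p → ℝ) : x ⬝ᵥ x = ∑ i, x i ^ 2 := by
  simp [dotProduct, sq]

lemma dot_self_nonneg (x : Fin p → ℝ) : 0 ≤ x ⬝ᵥ x := by
  rw [dot_self_eq]; exact Finset.sum_nonneg fun i _ => sq_nonneg _

lemma dot_self_pos {x : Fin p → ℝ} (hx : x ≠ 0) : 0 < x ⬝ᵥ x := by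
  rw [dot_self_eq]
  obtain ⟨j, hj⟩ := Function.ne_iff.1 hx
  have hj' : x j ≠ 0 := hj
  exact Finset.sum_pos' (fun i _ => sq_nonneg _)
    ⟨j, Finset.mem_univ j, pow_two_pos_of_ne_zero hj'⟩

lemma frobenius_norm_sq (N : Mat) : ‖N‖ ^ 2 = ∑ i, ∑ j, (N i j) ^ 2 := by
  have hs : (0:ℝ) ≤ ∑ i, ∑ j, ‖N i j‖ ^ (2:ℝ) :=
    Finset.sum_nonneg fun i _ => Finset.sum_nonneg fun j _ =>
      Real.rpow_nonneg (norm_nonneg _) _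
  have h1 : ‖N‖ = (∑ i, ∑ j, ‖N i j‖ ^ (2:ℝ)) ^ (1/2 : ℝ) := Matrix.frobenius_norm_def N
  have h2 : ‖N‖ ^ 2 = ∑ i, ∑ j, ‖N i j‖ ^ (2:ℝ) := by
    rw [h1, ← Real.rpow_natCast (((∑ i, ∑ j, ‖N i j‖ ^ (2:ℝ))) ^ (1/2 : ℝ)) 2,
      ← Real.rpow_mul hs]
    norm_num
  rw [h2]
  refine Finset.sum_congr rfl fun i _ => Finset.sum_congr rfl fun j _ => ?_
  rw [show ((2:ℝ)) = ((2:ℕ):ℝ) by norm_num, Real.rpow_natCast]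
  rw [Real.norm_eq_abs, sq_abs]

lemma quadform_eq_sum (N : Mat) (x : Fin p → ℝ) :
    x ⬝ᵥ N *ᵥ x = ∑ ij : Fin p × Fin p, N ij.1 ij.2 * (x ij.1 * x ij.2) := by
  rw [Fintype.sum_prod_type]
  simp only [dotProduct, Matrix.mulVec]
  rw [Finset.sum_congr rfl fun i (_ : i ∈ Finset.univ) => Finset.mul_sum
    (Finset.univ : Finset (Fin p)) (fun j => N i j * x j) (x i)]
  exact Finset.sum_congr rfl fun i _ => Finset.sum_congr rfl fun j _ => by ring

lemma quadform_abs_le (N : Mat) (x : Fin p → ℝ) :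
    |x ⬝ᵥ N *ᵥ x| ≤ ‖N‖ * (x ⬝ᵥ x) := by
  have hc : 0 ≤ ‖N‖ * (x ⬝ᵥ x) := mul_nonneg (norm_nonneg _) (dot_self_nonneg x)
  have hcs := Finset.sum_mul_sq_le_sq_mul_sq Finset.univ
    (fun ij : Fin p × Fin p => N ij.1 ij.2) (fun ij : Fin p × Fin p => x ij.1 * x ij.2)
  have hfact : ∑ ij : Fin p × Fin p, (x ij.1 * x ij.2) ^ 2 = (x ⬝ᵥ x) ^ 2 := by
    rw [Fintype.sum_prod_type, dot_self_eq, sq (∑ i, x i ^2), Finset.sum_mul_sum]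
    exact Finset.sum_congr rfl fun i _ => Finset.sum_congr rfl fun j _ => by ring
  have hN2 : ∑ ij : Fin p × Fin p, (N ij.1 ij.2) ^ 2 = ‖N‖ ^ 2 := by
    rw [frobenius_norm_sq, Fintype.sum_prod_type]
  have key : (x ⬝ᵥ N *ᵥ x) ^ 2 ≤ (‖N‖ * (x ⬝ᵥ x)) ^ 2 := by
    rw [quadform_eq_sum, mul_pow]
    calc (∑ ij : Fin p × Fin p, N ij.1 ij.2 * (x ij.1 * x ij.2)) ^ 2
        ≤ (∑ ij : Fin p × Fin p, (N ij.1 ij.2) ^ 2) *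
            ∑ ij : Fin p × Fin p, (x ij.1 * x ij.2) ^ 2 := hcs
      _ = ‖N‖ ^ 2 * (x ⬝ᵥ x) ^ 2 := by rw [hfact, hN2]
  calc |x ⬝ᵥ N *ᵥ x| = Real.sqrt ((x ⬝ᵥ N *ᵥ x) ^ 2) := (Real.sqrt_sq_eq_abs _).symm
    _ ≤ Real.sqrt ((‖N‖ * (x ⬝ᵥ x)) ^ 2) := Real.sqrt_le_sqrt key
    _ = ‖N‖ * (x ⬝ᵥ x) := Real.sqrt_sq hc

/-! ### openness of positive definiteness around `S_A` -/

lemma symPD_near {β : ℝ} (hβ : 0 < β) (hp : 0 < p) (Q : Mat) (d : Fin p → ℝ)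
    (hQ : Q * Qᵀ = 1) (hQ' : Qᵀ * Q = 1) :
    ∃ ε > 0, ∀ N : Mat, N.IsSymm →
      ‖N - Q * diagonal (fun i => fphi β (d i)) * Qᵀ‖ < ε → symPD N := by
  haveI : Nonempty (Fin p) := ⟨⟨0, hp⟩⟩
  set SA := Q * diagonal (fun i => fphi β (d i)) * Qᵀ with hSA
  set m := Finset.univ.inf' Finset.univ_nonempty (fun i => fphi β (d i)) with hm
  have hmpos : 0 < m := by
    rw [hm, Finset.lt_inf'_iff]
    exact fun i _ => fphi_pos hβ (d i)
  refine ⟨m, hmpos, fun N hN hnear => ⟨hN, fun x hx => ?_⟩⟩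
  have hxx := dot_self_pos hx
  have hlow : m * (x ⬝ᵥ x) ≤ x ⬝ᵥ SA *ᵥ x := by
    rw [hSA, conj_mulVec, ← orth_dot Q hQ x, dot_self_eq, Finset.mul_sum]
    refine Finset.sum_le_sum fun i _ => ?_
    exact mul_le_mul_of_nonneg_right (Finset.inf'_le _ (Finset.mem_univ i)) (sq_nonneg _)
  have hsplit : x ⬝ᵥ N *ᵥ x = x ⬝ᵥ SA *ᵥ x + x ⬝ᵥ (N - SA) *ᵥ x := by
    conv_lhs => rw [show N = SA + (N - SA) from by abel]
    rw [Matrix.add_mulVec, dotProduct_add]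
  have habs := quadform_abs_le (N - SA) x
  have hbd : ‖N - SA‖ * (x ⬝ᵥ x) < m * (x ⬝ᵥ x) :=
    mul_lt_mul_of_pos_right hnear hxx
  have := abs_le.1 habs
  rw [hsplit]
  nlinarith [this.1, this.2]

/-! ### conjugated-Hadamard operator calculus -/

lemma conj_cancel (Q : Mat) (hQ' : Qᵀ * Q = 1) (X : Mat) : Qᵀ * (Q * X * Qᵀ) * Q = X := by
  calc Qᵀ * (Q * X * Qᵀ) * Q = (Qᵀ * Q) * X * (Qᵀ * Q) := by simp only [Matrix.mul_assoc]
  _ = X := by rw [hQ', Matrix.one_mul, Matrix.mul_one]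

lemma conj_surj (Q : Mat) (hQ : Q * Qᵀ = 1) (H : Mat) : Q * (Qᵀ * H * Q) * Qᵀ = H := by
  calc Q * (Qᵀ * H * Q) * Qᵀ = (Q * Qᵀ) * H * (Q * Qᵀ) := by simp only [Matrix.mul_assoc]
  _ = H := by rw [hQ, Matrix.one_mul, Matrix.mul_one]

lemma diag_mul_mul_diag (g g' : Fin p → ℝ) (X : Mat) :
    diagonal g * X * diagonal g' = (Matrix.of fun i j => g i * g' j) ⊙ X := by
  ext i j
  simp [Matrix.diagonal_mul, Matrix.mul_diagonal, Matrix.hadamard_apply]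
  ring

lemma sandwich_conj (Q : Mat) (hQ' : Qᵀ * Q = 1) (g : Fin p → ℝ) (H : Mat) :
    (Q * diagonal g * Qᵀ) * H * (Q * diagonal g * Qᵀ)
      = Q * ((Matrix.of fun i j => g i * g j) ⊙ (Qᵀ * H * Q)) * Qᵀ := by
  rw [← diag_mul_mul_diag]
  calc (Q * diagonal g * Qᵀ) * H * (Q * diagonal g * Qᵀ)
      = Q * (diagonal g * ((Qᵀ * H) * Q) * diagonal g) * Qᵀ := by
        simp only [Matrix.mul_assoc, hQ', Matrix.mul_one, Matrix.one_mul]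
  _ = _ := by simp only [Matrix.mul_assoc]

/-- the operator `H ↦ H + β • (R H R)` in Hadamard form, for `R = Q diag g Qᵀ`. -/
lemma TE_form (β : ℝ) (Q : Mat) (hQ : Q * Qᵀ = 1) (hQ' : Qᵀ * Q = 1) (g : Fin p → ℝ) (H : Mat) :
    H + β • ((Q * diagonal g * Qᵀ) * H * (Q * diagonal g * Qᵀ))
      = Q * ((Matrix.of fun i j => 1 + β * (g i * g j)) ⊙ (Qᵀ * H * Q)) * Qᵀ := by
  rw [sandwich_conj Q hQ']
  nth_rewrite 1 [← conj_surj Q hQ H]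
  rw [← Matrix.smul_mul, ← Matrix.mul_smul, ← Matrix.add_mul, ← Matrix.mul_add]
  congr 2
  ext i j
  simp [Matrix.hadamard_apply]
  ring

lemma W_comp (Q : Mat) (hQ' : Qᵀ * Q = 1) (c c' : Mat) (H : Mat) :
    Q * (c ⊙ (Qᵀ * (Q * (c' ⊙ (Qᵀ * H * Q)) * Qᵀ) * Q)) * Qᵀ
      = Q * ((c ⊙ c' ⊙ (Qᵀ * H * Q))) * Qᵀ := by
  rw [conj_cancel Q hQ', Matrix.hadamard_assoc]

lemma W_entry_one (Q : Mat) (hQ : Q * Qᵀ = 1) (c : Mat) (hc : ∀ i j, c i j = 1) (H : Mat) :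
    Q * (c ⊙ (Qᵀ * H * Q)) * Qᵀ = H := by
  have h1 : c ⊙ (Qᵀ * H * Q) = Qᵀ * H * Q := by
    ext i j; rw [Matrix.hadamard_apply, hc i j, one_mul]
  rw [h1, conj_surj Q hQ]


/-! ### the submodule of symmetric matrices -/

lemma inv_isSymm {N : Mat} (h : N.IsSymm) : (N⁻¹).IsSymm := by
  show (N⁻¹)ᵀ = N⁻¹
  rw [Matrix.transpose_nonsing_inv, h.eq]

lemma hadamard_transpose' (A B : Mat) : (A ⊙ B)ᵀ = Aᵀ ⊙ Bᵀ := by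
  ext i j
  simp [Matrix.hadamard_apply]

lemma sand_isSymm {R : Mat} (hR : R.IsSymm) {H : Mat} (hH : H.IsSymm) :
    (R * H * R).IsSymm := by
  show (R * H * R)ᵀ = R * H * R
  rw [Matrix.transpose_mul, Matrix.transpose_mul, hR.eq, hH.eq, Matrix.mul_assoc]

lemma hadW_isSymm {Q c : Mat} (hc : cᵀ = c) {H : Mat} (hH : H.IsSymm) :
    (Q * (c ⊙ (Qᵀ * H * Q)) * Qᵀ).IsSymm := by
  show _ᵀ = _
  rw [Matrix.transpose_mul, Matrix.transpose_mul, Matrix.transpose_transpose,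
    hadamard_transpose', hc]
  have h2 : (Qᵀ * H * Q)ᵀ = Qᵀ * H * Q := by
    rw [Matrix.transpose_mul, Matrix.transpose_mul, Matrix.transpose_transpose, hH.eq,
      Matrix.mul_assoc]
  rw [h2]
  simp only [Matrix.mul_assoc]

lemma mem_symMat {N : Mat} : N ∈ symMat p ↔ N.IsSymm := Iff.rfl

/-- `ψ` on symmetric matrices. -/
noncomputable def psiE (β : ℝ) : symMat p → symMat p := fun S =>
  ⟨(S : Mat) - β • (S : Mat)⁻¹,
    sub_mem S.2 (Submodule.smul_mem _ _ (mem_symMat.2 (inv_isSymm (mem_symMat.1 S.2))))⟩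

/-- `φ⁺` on symmetric matrices. -/
noncomputable def phiE (β : ℝ) (hβ : 0 < β) : symMat p → symMat p := fun C =>
  ⟨phiPlusMat β (C : Mat), mem_symMat.2 (phi_isSymm hβ (mem_symMat.1 C.2))⟩

/-- the linear map `H ↦ H + β • (R * H * R)` on symmetric matrices. -/
noncomputable def sandLM (β : ℝ) (R : Mat) (hR : R.IsSymm) : symMat p →ₗ[ℝ] symMat p where
  toFun H := ⟨(H : Mat) + β • (R * (H : Mat) * R),
    add_mem H.2 (Submodule.smul_mem _ _ (mem_symMat.2 (sand_isSymm hR (mem_symMat.1 H.2))))⟩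
  map_add' H K := Subtype.ext <| by
    push_cast
    simp only [Matrix.mul_add, Matrix.add_mul, smul_add]
    abel
  map_smul' c H := Subtype.ext <| by
    push_cast
    simp only [RingHom.id_apply, id_eq, Matrix.mul_smul, Matrix.smul_mul, smul_add, smul_comm β c]

/-- the linear map `B ↦ Q (c ⊙ (Qᵀ B Q)) Qᵀ` on symmetric matrices. -/
noncomputable def hadWLM (Q c : Mat) (hc : cᵀ = c) : symMat p →ₗ[ℝ] symMat p where
  toFun B := ⟨Q * (c ⊙ (Qᵀ * (B : Mat) * Q)) * Qᵀ,
    mem_symMat.2 (hadW_isSymm hc (mem_symMat.1 B.2))⟩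
  map_add' H K := Subtype.ext <| by
    push_cast
    simp only [Matrix.mul_add, Matrix.add_mul, Matrix.hadamard_add]
  map_smul' c' H := Subtype.ext <| by
    push_cast
    simp only [RingHom.id_apply, id_eq, Matrix.mul_smul, Matrix.smul_mul, Matrix.hadamard_smul]

/-! ### analysis -/

section Analysis

attribute [local instance] Matrix.frobeniusNormedAddCommGroup Matrix.frobeniusNormedSpace
  Matrix.frobeniusNormedRing Matrix.frobeniusNormedAlgebra

/-- transfer a strict derivative along the (isometric) inclusion of a submodule -/
lemma hasStrictFDerivAt_codRestrict {X F : Type*} [NormedAddCommGroup X] [NormedSpace ℝ X]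
    [NormedAddCommGroup F] [NormedSpace ℝ F]
    {S : Submodule ℝ F} {f : X → S} {L : X →L[ℝ] S} {x : X}
    (h : HasStrictFDerivAt (fun y => (f y : F)) (S.subtypeL.comp L) x) :
    HasStrictFDerivAt f L x := by
  refine .of_isLittleO ?_
  have h2 := h.isLittleO
  rw [← Asymptotics.isLittleO_norm_left] at h2 ⊢
  have heq : (fun q : X × X => ‖f q.1 - f q.2 - L (q.1 - q.2)‖)
      = fun q : X × X => ‖(f q.1 : F) - (f q.2 : F) - (S.subtypeL.comp L) (q.1 - q.2)‖ := by
    funext q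
    rw [Submodule.coe_norm]
    push_cast
    rfl
  rw [heq]
  exact h2

lemma psiE_hasStrictFDerivAt (β : ℝ) (SAE : symMat p)
    (hu : IsUnit (SAE : Mat)) :
    HasStrictFDerivAt (psiE β : symMat p → symMat p)
      (LinearMap.toContinuousLinearMap
        (sandLM β ((SAE : Mat))⁻¹ (inv_isSymm (mem_symMat.1 SAE.2)))) SAE := by
  set SA := (SAE : Mat) with hSAdef
  set u := hu.unit with hudef
  have hcoe : (↑u : Mat) = SA := hu.unit_spec
  have hcoeinv : (↑u⁻¹ : Mat) = SA⁻¹ := by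
    rw [Matrix.nonsing_inv_eq_ringInverse, ← hcoe, Ring.inverse_unit]
  have h1 : HasStrictFDerivAt (Ring.inverse : Mat → Mat)
      (-((ContinuousLinearMap.mulLeftRight ℝ Mat) SA⁻¹ SA⁻¹)) SA := by
    have := hasStrictFDerivAt_ringInverse (𝕜 := ℝ) u
    rwa [hcoe, hcoeinv] at this
  have h2 : HasStrictFDerivAt (fun N : Mat => N⁻¹)
      (-((ContinuousLinearMap.mulLeftRight ℝ Mat) SA⁻¹ SA⁻¹)) SA := by
    have hfun : (fun N : Mat => N⁻¹) = (Ring.inverse : Mat → Mat) :=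
      funext fun N => Matrix.nonsing_inv_eq_ringInverse N
    rw [hfun]; exact h1
  have h3 : HasStrictFDerivAt (fun N : Mat => N - β • N⁻¹)
      (ContinuousLinearMap.id ℝ Mat
        - (show Mat →L[ℝ] Mat from β • (-((ContinuousLinearMap.mulLeftRight ℝ Mat) SA⁻¹ SA⁻¹)))) SA :=
    (hasStrictFDerivAt_id SA).sub (h2.const_smul β)
  have hι : HasStrictFDerivAt (fun S : symMat p => (S : Mat)) ((symMat p).subtypeL) SAE :=
    ((symMat p).subtypeL).hasStrictFDerivAt
  have h4 : HasStrictFDerivAt (fun S : symMat p => (S : Mat) - β • ((S : Mat))⁻¹)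
      ((ContinuousLinearMap.id ℝ Mat
        - (show Mat →L[ℝ] Mat from β • (-((ContinuousLinearMap.mulLeftRight ℝ Mat) SA⁻¹ SA⁻¹)))).comp
        ((symMat p).subtypeL)) SAE := h3.comp SAE hι
  apply hasStrictFDerivAt_codRestrict
  have h5 : (symMat p).subtypeL.comp (LinearMap.toContinuousLinearMap
        (sandLM β ((SAE : Mat))⁻¹ (inv_isSymm (mem_symMat.1 SAE.2))))
      = (ContinuousLinearMap.id ℝ Mat
        - (show Mat →L[ℝ] Mat from β • (-((ContinuousLinearMap.mulLeftRight ℝ Mat) SA⁻¹ SA⁻¹)))).comp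
        ((symMat p).subtypeL) := by
    apply ContinuousLinearMap.ext
    intro H
    simp only [ContinuousLinearMap.coe_comp', Function.comp_apply,
      ContinuousLinearMap.coe_sub', ContinuousLinearMap.coe_smul',
      ContinuousLinearMap.coe_id', Pi.sub_apply, Pi.smul_apply, Pi.neg_apply,
      ContinuousLinearMap.neg_apply, ContinuousLinearMap.mulLeftRight_apply,
      LinearMap.coe_toContinuousLinearMap, Submodule.coe_subtypeL', Submodule.coe_subtype]
    show ((sandLM β SA⁻¹ (inv_isSymm (mem_symMat.1 SAE.2)) H : symMat p) : Mat) = H - β • -(SA⁻¹ * (H : Mat) * SA⁻¹)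
    show (H : Mat) + β • (SA⁻¹ * (H : Mat) * SA⁻¹) = _
    rw [smul_neg, sub_neg_eq_add]
  exact h5 ▸ h4

end Analysis

/-- Proposition 2.3: the map `φ⁺_β`, viewed on the space of real symmetric
`p×p` matrices (with the Frobenius norm), is Fréchet differentiable at every symmetric `A`,
and if `A = Q ⬝ diag(d) ⬝ Qᵀ` with `Q` orthogonal, its derivative applied to a symmetric
`B` is `Q ⬝ (Γ ⊙ (Qᵀ B Q)) ⬝ Qᵀ`, where
`Γᵢⱼ = (φ⁺_β(dᵢ) + φ⁺_β(dⱼ)) / (√(dᵢ²+4β) + √(dⱼ²+4β))`. -/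
theorem stmt5 {p : ℕ} (β : ℝ) (hβ : 0 < β)
    (A : symMat p) (Q : Matrix (Fin p) (Fin p) ℝ) (d : Fin p → ℝ)
    (hQ : Q * Qᵀ = 1) (hQ' : Qᵀ * Q = 1)
    (hdecomp : (A : Matrix (Fin p) (Fin p) ℝ) = Q * Matrix.diagonal d * Qᵀ)
    (Γ : Matrix (Fin p) (Fin p) ℝ)
    (hΓ : Γ = Matrix.of fun i j =>
      ((Real.sqrt ((d i) ^ 2 + 4 * β) + d i) / 2 + (Real.sqrt ((d j) ^ 2 + 4 * β) + d j) / 2)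
        / (Real.sqrt ((d i) ^ 2 + 4 * β) + Real.sqrt ((d j) ^ 2 + 4 * β))) :
    ∃ L : (symMat p) →L[ℝ] Matrix (Fin p) (Fin p) ℝ,
      HasFDerivAt (fun B : symMat p => phiPlusMat β (B : Matrix (Fin p) (Fin p) ℝ)) L A ∧
      ∀ B : symMat p,
        L B = Q * (Γ ⊙ (Qᵀ * (B : Matrix (Fin p) (Fin p) ℝ) * Q)) * Qᵀ := by
  rcases Nat.eq_zero_or_pos p with hp0 | hp
  · subst hp0
    refine ⟨0, ?_, fun B => Subsingleton.elim _ _⟩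
    have hf : (fun B : symMat 0 => phiPlusMat β (B : Matrix (Fin 0) (Fin 0) ℝ))
        = fun _ => (0 : Matrix (Fin 0) (Fin 0) ℝ) := funext fun B => Subsingleton.elim _ _
    rw [hf]
    exact hasFDerivAt_const 0 A
  -- main case
  set g : Fin p → ℝ := fun i => (fphi β (d i))⁻¹ with hg
  have hAsymm : (A : Matrix (Fin p) (Fin p) ℝ).IsSymm := mem_symMat.1 A.2
  have hΓs : Γᵀ = Γ := by
    rw [hΓ]
    ext i j
    simp only [Matrix.transpose_apply, Matrix.of_apply]
    ring
  set SAE : symMat p := phiE β hβ A with hSAE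
  have hSAmat : (SAE : Matrix (Fin p) (Fin p) ℝ)
      = Q * diagonal (fun i => fphi β (d i)) * Qᵀ := by
    show phiPlusMat β (A : Matrix (Fin p) (Fin p) ℝ) = _
    rw [hdecomp, phiPlusMat_conj hβ Q hQ hQ']
  have hSApd : symPD (SAE : Matrix (Fin p) (Fin p) ℝ) := phi_symPD hβ hAsymm
  have hu : IsUnit (SAE : Matrix (Fin p) (Fin p) ℝ) := by
    rw [Matrix.isUnit_iff_isUnit_det]
    have h1 := (symPD_inv_facts hSApd).1
    have h2 : (SAE : Matrix (Fin p) (Fin p) ℝ).det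
        * ((SAE : Matrix (Fin p) (Fin p) ℝ)⁻¹).det = 1 := by
      rw [← Matrix.det_mul, h1, Matrix.det_one]
    exact IsUnit.of_mul_eq_one _ h2
  have hSAinv : ((SAE : Matrix (Fin p) (Fin p) ℝ))⁻¹ = Q * diagonal g * Qᵀ := by
    rw [hSAmat]
    exact conj_inverse Q hQ hQ' _ fun i => (fphi_pos hβ (d i)).ne'
  have hinvSymm : (((SAE : Matrix (Fin p) (Fin p) ℝ))⁻¹).IsSymm :=
    inv_isSymm (mem_symMat.1 SAE.2)
  set TEl := sandLM β ((SAE : Matrix (Fin p) (Fin p) ℝ))⁻¹ hinvSymm with hTEl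
  set GEl := hadWLM Q Γ hΓs with hGEl
  have hτΓ : ∀ i j : Fin p,
      ((Matrix.of fun i j => 1 + β * (g i * g j)) ⊙ Γ) i j = 1 := by
    intro i j
    rw [Matrix.hadamard_apply, hΓ]
    simp only [Matrix.of_apply]
    rw [mul_comm]
    exact gamma_mul_tau hβ (d i) (d j)
  have hΓτ : ∀ i j : Fin p,
      (Γ ⊙ (Matrix.of fun i j => 1 + β * (g i * g j))) i j = 1 := by
    intro i j
    rw [Matrix.hadamard_apply, hΓ]
    simp only [Matrix.of_apply]
    exact gamma_mul_tau hβ (d i) (d j)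
  have hTG : ∀ H : symMat p, TEl (GEl H) = H := by
    intro H
    apply Subtype.ext
    show ((GEl H : symMat p) : Matrix (Fin p) (Fin p) ℝ)
        + β • (((SAE : Matrix (Fin p) (Fin p) ℝ))⁻¹
          * ((GEl H : symMat p) : Matrix (Fin p) (Fin p) ℝ)
          * ((SAE : Matrix (Fin p) (Fin p) ℝ))⁻¹) = (H : Matrix (Fin p) (Fin p) ℝ)
    rw [hSAinv]
    show (Q * (Γ ⊙ (Qᵀ * (H : Matrix (Fin p) (Fin p) ℝ) * Q)) * Qᵀ)
        + β • ((Q * diagonal g * Qᵀ)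
          * (Q * (Γ ⊙ (Qᵀ * (H : Matrix (Fin p) (Fin p) ℝ) * Q)) * Qᵀ)
          * (Q * diagonal g * Qᵀ)) = (H : Matrix (Fin p) (Fin p) ℝ)
    rw [TE_form β Q hQ hQ' g, W_comp Q hQ']
    exact W_entry_one Q hQ _ hτΓ _
  have hGT : ∀ H : symMat p, GEl (TEl H) = H := by
    intro H
    apply Subtype.ext
    show Q * (Γ ⊙ (Qᵀ * ((TEl H : symMat p) : Matrix (Fin p) (Fin p) ℝ) * Q)) * Qᵀ
        = (H : Matrix (Fin p) (Fin p) ℝ)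
    have hTElmat : ((TEl H : symMat p) : Matrix (Fin p) (Fin p) ℝ)
        = Q * ((Matrix.of fun i j => 1 + β * (g i * g j))
            ⊙ (Qᵀ * (H : Matrix (Fin p) (Fin p) ℝ) * Q)) * Qᵀ := by
      show (H : Matrix (Fin p) (Fin p) ℝ)
          + β • (((SAE : Matrix (Fin p) (Fin p) ℝ))⁻¹
            * (H : Matrix (Fin p) (Fin p) ℝ) * ((SAE : Matrix (Fin p) (Fin p) ℝ))⁻¹) = _
      rw [hSAinv]
      exact TE_form β Q hQ hQ' g _
    rw [hTElmat, W_comp Q hQ']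
    exact W_entry_one Q hQ _ hΓτ _
  set eqv : symMat p ≃ₗ[ℝ] symMat p :=
    LinearEquiv.ofLinear TEl GEl (LinearMap.ext hTG) (LinearMap.ext hGT) with heqv
  set CLE := eqv.toContinuousLinearEquiv with hCLE
  have hψ := psiE_hasStrictFDerivAt β SAE hu
  have hCLEcoe : (CLE : symMat p →L[ℝ] symMat p)
      = LinearMap.toContinuousLinearMap TEl := by
    ext H
    rfl
  have hψ' : HasStrictFDerivAt (psiE β : symMat p → symMat p)
      (CLE : symMat p →L[ℝ] symMat p) SAE := by
    rw [hCLEcoe]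
    exact hψ
  obtain ⟨ε, hε, hopen⟩ := symPD_near hβ hp Q d hQ hQ'
  have hev : ∀ᶠ S : symMat p in nhds SAE, phiE β hβ (psiE β S) = S := by
    refine Filter.eventually_of_mem (Metric.ball_mem_nhds SAE hε) fun S hS => ?_
    have hnear : ‖(S : Matrix (Fin p) (Fin p) ℝ) - (SAE : Matrix (Fin p) (Fin p) ℝ)‖ < ε := by
      have hd : dist S SAE < ε := Metric.mem_ball.1 hS
      rw [dist_eq_norm] at hd
      rw [show (S : Matrix (Fin p) (Fin p) ℝ) - (SAE : Matrix (Fin p) (Fin p) ℝ)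
          = ((S - SAE : symMat p) : Matrix (Fin p) (Fin p) ℝ) from by push_cast; rfl,
        ← Submodule.coe_norm]
      exact hd
    rw [hSAmat] at hnear
    have hSpd : symPD (S : Matrix (Fin p) (Fin p) ℝ) :=
      hopen _ (mem_symMat.1 S.2) hnear
    have hCsym : ((psiE β S : symMat p) : Matrix (Fin p) (Fin p) ℝ).IsSymm :=
      mem_symMat.1 (psiE β S).2
    have hphiPD : symPD (phiPlusMat β ((psiE β S : symMat p) : Matrix (Fin p) (Fin p) ℝ)) :=
      phi_symPD hβ hCsym
    have hpsiphi := phi_psi hβ hCsym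
    apply Subtype.ext
    show phiPlusMat β ((psiE β S : symMat p) : Matrix (Fin p) (Fin p) ℝ)
        = (S : Matrix (Fin p) (Fin p) ℝ)
    apply psi_inj hβ hphiPD hSpd
    rw [hpsiphi]
    rfl
  have hφ := hψ'.to_local_left_inverse hev
  have hpt : psiE β SAE = A := by
    apply Subtype.ext
    show (SAE : Matrix (Fin p) (Fin p) ℝ)
        - β • ((SAE : Matrix (Fin p) (Fin p) ℝ))⁻¹ = (A : Matrix (Fin p) (Fin p) ℝ)
    exact phi_psi hβ hAsymm
  rw [hpt] at hφ
  refine ⟨((symMat p).subtypeL).comp (CLE.symm : symMat p →L[ℝ] symMat p), ?_, ?_⟩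
  · exact ((symMat p).subtypeL).hasFDerivAt.comp A hφ.hasFDerivAt
  · intro B
    show ((CLE.symm : symMat p →L[ℝ] symMat p) B : Matrix (Fin p) (Fin p) ℝ) = _
    have hsymmB : (CLE.symm : symMat p →L[ℝ] symMat p) B = GEl B := rfl
    rw [hsymmB]
    rfl
end

section
/- (Content of Lemma 3.1.) Let β > 0 and let A be a real symmetric p×p matrix with spectral decomposition A = Q·Diag(d₁,…,d_p)·Qᵀ, Q orthogonal. Define the linear operator L on the space of real symmetric p×p matrices by L(B) = Q·(Γ ⊙ (Qᵀ B Q))·Qᵀ, where Γ_{ij} = (φ⁺_β(d_i) + φ⁺_β(d_j)) / (√(d_i² + 4β) + √(d_j² + 4β)) and ⊙ is the Hadamard product. Then L is self-adjoint with respect to the Frobenius inner product, and for every nonzero symmetric B one has 0 < ⟨L(B), B⟩ < ‖B‖²; in particular all eigenvalues of L lie in the open interval (0,1). -/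
open Matrix
open scoped Matrix

lemma frob_eq {p : ℕ} (X Y : Matrix (Fin p) (Fin p) ℝ) :
    ∑ i, ∑ j, X i j * Y i j = (X * Yᵀ).trace := by
  simp [Matrix.trace, Matrix.mul_apply, Matrix.diag]

lemma conj_frob {p : ℕ} (Q X C : Matrix (Fin p) (Fin p) ℝ) :
    ∑ i, ∑ j, (Q * X * Qᵀ) i j * C i j = ∑ i, ∑ j, X i j * (Qᵀ * C * Q) i j := by
  rw [frob_eq, frob_eq]
  have h1 : Q * X * Qᵀ * Cᵀ = Q * (X * Qᵀ * Cᵀ) := by simp [Matrix.mul_assoc]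
  have h2 : (Qᵀ * C * Q)ᵀ = Qᵀ * Cᵀ * Q := by simp [Matrix.transpose_mul, Matrix.mul_assoc]
  rw [h1, Matrix.trace_mul_comm, h2]
  simp [Matrix.mul_assoc]

lemma sqrt_gt {β x : ℝ} (hβ : 0 < β) : |x| < Real.sqrt (x ^ 2 + 4 * β) := by
  have := Real.sqrt_lt_sqrt (sq_nonneg x) (by linarith : x ^ 2 < x ^ 2 + 4 * β)
  rwa [Real.sqrt_sq_eq_abs] at this

/-- content of Lemma 3.1: For `β > 0` and a symmetric matrix
`A = Q ⬝ diag(d) ⬝ Qᵀ` (`Q` orthogonal), the linear operator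
`L(B) = Q ⬝ (Γ ⊙ (Qᵀ B Q)) ⬝ Qᵀ`, with
`Γ_{ij} = (φ⁺_β(dᵢ) + φ⁺_β(dⱼ)) / (√(dᵢ²+4β) + √(dⱼ²+4β))`, is self-adjoint with respect
to the Frobenius inner product on symmetric matrices, and `0 < ⟨L(B), B⟩ < ‖B‖²` for every
nonzero symmetric `B`. -/
theorem stmt7 {p : ℕ} (β : ℝ) (hβ : 0 < β)
    (A Q : Matrix (Fin p) (Fin p) ℝ) (d : Fin p → ℝ)
    (hA : A.IsSymm)
    (hQ : Q * Qᵀ = 1) (hQ' : Qᵀ * Q = 1)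
    (hdecomp : A = Q * Matrix.diagonal d * Qᵀ)
    (Γ : Matrix (Fin p) (Fin p) ℝ)
    (hΓ : Γ = Matrix.of fun i j =>
      ((Real.sqrt ((d i) ^ 2 + 4 * β) + d i) / 2 + (Real.sqrt ((d j) ^ 2 + 4 * β) + d j) / 2)
        / (Real.sqrt ((d i) ^ 2 + 4 * β) + Real.sqrt ((d j) ^ 2 + 4 * β)))
    (L : Matrix (Fin p) (Fin p) ℝ → Matrix (Fin p) (Fin p) ℝ)
    (hL : ∀ B, L B = Q * (Γ ⊙ (Qᵀ * B * Q)) * Qᵀ) :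
    (∀ B C : Matrix (Fin p) (Fin p) ℝ, B.IsSymm → C.IsSymm →
      ∑ i, ∑ j, (L B) i j * C i j = ∑ i, ∑ j, B i j * (L C) i j) ∧
    (∀ B : Matrix (Fin p) (Fin p) ℝ, B.IsSymm → B ≠ 0 →
      0 < ∑ i, ∑ j, (L B) i j * B i j ∧
      ∑ i, ∑ j, (L B) i j * B i j < ∑ i, ∑ j, (B i j) ^ 2) := by
  -- bounds on Γ entries
  have hΓpos : ∀ i j, 0 < Γ i j ∧ Γ i j < 1 := by
    intro i j
    have hi := sqrt_gt (x := d i) hβ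
    have hj := sqrt_gt (x := d j) hβ
    have hi1 : -d i < Real.sqrt (d i ^ 2 + 4 * β) := lt_of_le_of_lt (neg_le_abs _) hi
    have hi2 : d i < Real.sqrt (d i ^ 2 + 4 * β) := lt_of_le_of_lt (le_abs_self _) hi
    have hj1 : -d j < Real.sqrt (d j ^ 2 + 4 * β) := lt_of_le_of_lt (neg_le_abs _) hj
    have hj2 : d j < Real.sqrt (d j ^ 2 + 4 * β) := lt_of_le_of_lt (le_abs_self _) hj
    rw [hΓ]
    simp only [Matrix.of_apply]
    constructor
    · exact div_pos (by linarith) (by linarith)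
    · rw [div_lt_one (by linarith)]; linarith
  -- key rewrite of the bilinear form
  have key : ∀ B C : Matrix (Fin p) (Fin p) ℝ,
      ∑ i, ∑ j, (L B) i j * C i j
        = ∑ i, ∑ j, Γ i j * ((Qᵀ * B * Q) i j * (Qᵀ * C * Q) i j) := by
    intro B C
    rw [hL, conj_frob]
    refine Finset.sum_congr rfl fun i _ => Finset.sum_congr rfl fun j _ => ?_
    simp [Matrix.hadamard]; ring
  constructor
  · intro B C hB hC
    have hsymmM : ∀ (X : Matrix (Fin p) (Fin p) ℝ), X.IsSymm →
        ∀ i j, (Qᵀ * X * Q) j i = (Qᵀ * X * Q) i j := by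
      intro X hX i j
      have h : (Qᵀ * X * Q)ᵀ = Qᵀ * X * Q := by
        simp [Matrix.transpose_mul, Matrix.mul_assoc, hX.eq]
      simpa using congrFun (congrFun h i) j
    have h2 : ∑ i, ∑ j, B i j * (L C) i j
        = ∑ i, ∑ j, Γ i j * ((Qᵀ * C * Q) i j * (Qᵀ * B * Q) i j) := by
      rw [← key C B]
      exact Finset.sum_congr rfl fun i _ => Finset.sum_congr rfl fun j _ => mul_comm _ _
    rw [key B C, h2, Finset.sum_comm]
    refine Finset.sum_congr rfl fun i _ => Finset.sum_congr rfl fun j _ => ?_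
    have hsymm : Γ i j = Γ j i := by rw [hΓ]; simp only [Matrix.of_apply]; ring
    rw [hsymm, hsymmM B hB, hsymmM C hC]; ring
  · intro B hB hBne
    set M := Qᵀ * B * Q with hM
    have hBM : B = Q * M * Qᵀ := by
      rw [hM]
      calc B = (Q * Qᵀ) * B * (Q * Qᵀ) := by rw [hQ]; simp
        _ = Q * (Qᵀ * B * Q) * Qᵀ := by simp [Matrix.mul_assoc]
    have hMne : M ≠ 0 := by
      intro h
      apply hBne
      rw [hBM, h]; simp
    obtain ⟨i0, j0, hij0⟩ : ∃ i j, M i j ≠ 0 := by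
      by_contra h
      push_neg at h
      exact hMne (Matrix.ext fun i j => by simpa using h i j)
    have hsq : 0 < M i0 j0 ^ 2 := by positivity
    have hkey := key B B
    rw [hkey]
    have hBB : ∑ i, ∑ j, (B i j) ^ 2 = ∑ i, ∑ j, M i j * M i j := by
      have := conj_frob Q M B
      rw [← hBM, ← hM] at this
      rw [← this]
      exact Finset.sum_congr rfl fun i _ => Finset.sum_congr rfl fun j _ => sq (B i j)
    constructor
    · refine Finset.sum_pos' (fun i _ => Finset.sum_nonneg fun j _ => ?_)
        ⟨i0, Finset.mem_univ _, ?_⟩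
      · have := (hΓpos i j).1
        nlinarith [sq_nonneg (M i j)]
      · refine Finset.sum_pos' (fun j _ => ?_) ⟨j0, Finset.mem_univ _, ?_⟩
        · have := (hΓpos i0 j).1
          nlinarith [sq_nonneg (M i0 j)]
        · have := (hΓpos i0 j0).1
          nlinarith
    · rw [hBB]
      refine Finset.sum_lt_sum (fun i _ => Finset.sum_le_sum fun j _ => ?_)
        ⟨i0, Finset.mem_univ _, ?_⟩
      · have h1 := (hΓpos i j).2
        nlinarith [sq_nonneg (M i j)]
      · refine Finset.sum_lt_sum (fun j _ => ?_) ⟨j0, Finset.mem_univ _, ?_⟩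
        · have h1 := (hΓpos i0 j).2
          nlinarith [sq_nonneg (M i0 j)]
        · have h1 := (hΓpos i0 j0).2
          nlinarith
end

section
/- (Lemma 3.2.) Let E be a finite-dimensional real inner product space, let G : E → E be a self-adjoint linear operator satisfying 0 ≤ ⟨G(x), x⟩ ≤ ‖x‖² for all x ∈ E (i.e., all eigenvalues of G lie in [0,1]), and let B : E → E be a self-adjoint linear operator with ⟨B(x), x⟩ > 0 for all x ≠ 0. Then the linear operator I − G + G∘B is nonsingular (bijective). -/
open scoped RealInnerProductSpace

/-- Lemma 3.2: If `G` is a self-adjoint linear operator on a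
finite-dimensional real inner product space with `0 ≤ ⟨G x, x⟩ ≤ ‖x‖²` for all `x`, and
`B` is a self-adjoint positive definite linear operator, then `I - G + G ∘ B` is
bijective. -/
theorem stmt8 {E : Type*} [NormedAddCommGroup E] [InnerProductSpace ℝ E]
    [FiniteDimensional ℝ E]
    (G B : E →ₗ[ℝ] E)
    (hGsa : ∀ x y : E, ⟪G x, y⟫ = ⟪x, G y⟫)
    (hG0 : ∀ x : E, 0 ≤ ⟪G x, x⟫)
    (hG1 : ∀ x : E, ⟪G x, x⟫ ≤ ‖x‖ ^ 2)
    (hBsa : ∀ x y : E, ⟪B x, y⟫ = ⟪x, B y⟫)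
    (hBpd : ∀ x : E, x ≠ 0 → 0 < ⟪B x, x⟫) :
    Function.Bijective (⇑(LinearMap.id - G + G ∘ₗ B : E →ₗ[ℝ] E)) := by
  -- Cauchy–Schwarz for the semi-inner product (x, y) ↦ ⟪G x, y⟫
  have hsymm : ∀ x y : E, ⟪G x, y⟫ = ⟪G y, x⟫ := by
    intro x y
    rw [hGsa, real_inner_comm]
  have hCS : ∀ x y : E, ⟪G x, y⟫ ^ 2 ≤ ⟪G x, x⟫ * ⟪G y, y⟫ := by
    intro x y
    have hq : ∀ t : ℝ, 0 ≤ ⟪G y, y⟫ * (t * t) + (2 * ⟪G x, y⟫) * t + ⟪G x, x⟫ := by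
      intro t
      have h := hG0 (x + t • y)
      have hexp : ⟪G (x + t • y), x + t • y⟫
          = ⟪G y, y⟫ * (t * t) + (2 * ⟪G x, y⟫) * t + ⟪G x, x⟫ := by
        rw [map_add, map_smul]
        simp only [inner_add_left, inner_add_right, inner_smul_left, inner_smul_right,
          RCLike.ofReal_real_eq_id, id_eq, conj_trivial]
        rw [hsymm y x]
        ring
      linarith [hexp ▸ h]
    have hd := discrim_le_zero (a := (⟪G y, y⟫ : ℝ)) (b := 2 * ⟪G x, y⟫) (c := ⟪G x, x⟫) hq
    rw [discrim] at hd
    nlinarith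
  have hGsq : ∀ y : E, ‖G y‖ ^ 2 ≤ ⟪G y, y⟫ := by
    intro y
    rcases eq_or_ne (G y) 0 with h0 | h0
    · simp [h0, hG0 y]
    · have h1 := hCS y (G y)
      have h2 : ⟪G (G y), G y⟫ ≤ ‖G y‖ ^ 2 := hG1 (G y)
      have h3 : ⟪G y, G y⟫ = ‖G y‖ ^ 2 := real_inner_self_eq_norm_sq (G y)
      have hpos : (0:ℝ) < ‖G y‖ ^ 2 := by
        have := norm_pos_iff.mpr h0
        positivity
      nlinarith [hG0 y, hG0 (G y)]
  -- injectivity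
  have hinj : Function.Injective (⇑(LinearMap.id - G + G ∘ₗ B : E →ₗ[ℝ] E)) := by
    rw [injective_iff_map_eq_zero]
    intro x hx
    simp only [LinearMap.add_apply, LinearMap.sub_apply, LinearMap.id_apply,
      LinearMap.comp_apply] at hx
    have hxG : G (x - B x) = x := by
      rw [sub_add, sub_eq_zero] at hx
      rw [map_sub]
      exact hx.symm
    by_contra hx0
    have hB := hBpd x hx0
    have h1 : ‖x‖ ^ 2 ≤ ⟪G (x - B x), x - B x⟫ := by
      calc ‖x‖ ^ 2 = ‖G (x - B x)‖ ^ 2 := by rw [hxG]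
        _ ≤ _ := hGsq (x - B x)
    have h2 : ⟪G (x - B x), x - B x⟫ = ⟪x, x⟫ - ⟪x, B x⟫ := by
      rw [hxG, inner_sub_right]
    have h3 : ⟪x, x⟫ = ‖x‖ ^ 2 := real_inner_self_eq_norm_sq x
    have h4 : ⟪B x, x⟫ = ⟪x, B x⟫ := (real_inner_comm (B x) x).symm
    linarith
  exact ⟨hinj, (LinearMap.injective_iff_surjective).mp hinj⟩
end

section
/- (Algebraic core of Theorem 3.3(a).) Let E be a finite-dimensional real inner product space. Let G_f : E → E be a self-adjoint linear operator with 0 < ⟨G_f(x), x⟩ < ‖x‖² for all x ≠ 0 (self-adjoint positive definite with all eigenvalues < 1), and let G_P : E → E be a self-adjoint linear operator with 0 ≤ ⟨G_P(x), x⟩ ≤ ‖x‖² for all x ∈ E. If ΔΩ, ΔΘ, ΔX ∈ E satisfy ΔX + G_f(ΔΩ − ΔX) = 0, ΔX − G_P(ΔΘ + ΔX) = 0, and ΔΩ − ΔΘ = 0, then ΔΩ = ΔΘ = ΔX = 0. -/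
open scoped RealInnerProductSpace

/-- Cauchy–Schwarz for the PSD bilinear form `(p,q) ↦ ⟪L p, q⟫`. -/
lemma cs_psd {E : Type*} [NormedAddCommGroup E] [InnerProductSpace ℝ E]
    (L : E →ₗ[ℝ] E) (hsa : ∀ x y : E, ⟪L x, y⟫ = ⟪x, L y⟫)
    (hpos : ∀ x : E, 0 ≤ ⟪L x, x⟫) (p q : E) :
    ⟪L p, q⟫ ^ 2 ≤ ⟪L p, p⟫ * ⟪L q, q⟫ := by
  have hsym : ⟪L q, p⟫ = ⟪L p, q⟫ := by
    rw [hsa q p, real_inner_comm]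
  have key : ∀ t : ℝ, 0 ≤ ⟪L p, p⟫ * (t * t) + (2 * ⟪L p, q⟫) * t + ⟪L q, q⟫ := by
    intro t
    have h := hpos (t • p + q)
    have hexp : ⟪L (t • p + q), t • p + q⟫
        = ⟪L p, p⟫ * (t * t) + (2 * ⟪L p, q⟫) * t + ⟪L q, q⟫ := by
      simp only [map_add, map_smul, inner_add_left, inner_add_right,
        real_inner_smul_left, real_inner_smul_right, hsym]
      ring
    rw [hexp] at h
    exact h
  have hd := discrim_le_zero (a := ⟪L p, p⟫) (b := 2 * ⟪L p, q⟫) (c := ⟪L q, q⟫) key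
  rw [discrim] at hd
  nlinarith [hd]

/-- algebraic core of Theorem 3.3(a): Let `G_f` be self-adjoint with
`0 < ⟨G_f x, x⟩ < ‖x‖²` for `x ≠ 0`, and `G_P` self-adjoint with
`0 ≤ ⟨G_P x, x⟩ ≤ ‖x‖²`. If `ΔX + G_f(ΔΩ - ΔX) = 0`, `ΔX - G_P(ΔΘ + ΔX) = 0` and
`ΔΩ - ΔΘ = 0`, then `ΔΩ = ΔΘ = ΔX = 0`. -/
theorem stmt9 {E : Type*} [NormedAddCommGroup E] [InnerProductSpace ℝ E]
    [FiniteDimensional ℝ E]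
    (Gf GP : E →ₗ[ℝ] E)
    (hGfsa : ∀ x y : E, ⟪Gf x, y⟫ = ⟪x, Gf y⟫)
    (hGf0 : ∀ x : E, x ≠ 0 → 0 < ⟪Gf x, x⟫)
    (hGf1 : ∀ x : E, x ≠ 0 → ⟪Gf x, x⟫ < ‖x‖ ^ 2)
    (hGPsa : ∀ x y : E, ⟪GP x, y⟫ = ⟪x, GP y⟫)
    (hGP0 : ∀ x : E, 0 ≤ ⟪GP x, x⟫)
    (hGP1 : ∀ x : E, ⟪GP x, x⟫ ≤ ‖x‖ ^ 2)
    (ΔΩ ΔΘ ΔX : E)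
    (h1 : ΔX + Gf (ΔΩ - ΔX) = 0)
    (h2 : ΔX - GP (ΔΘ + ΔX) = 0)
    (h3 : ΔΩ - ΔΘ = 0) :
    ΔΩ = 0 ∧ ΔΘ = 0 ∧ ΔX = 0 := by
  have hGf0' : ∀ x : E, 0 ≤ ⟪Gf x, x⟫ := by
    intro x
    rcases eq_or_ne x 0 with rfl | hx
    · simp
    · exact (hGf0 x hx).le
  have hΩΘ : ΔΩ = ΔΘ := sub_eq_zero.mp h3
  set u : E := ΔΩ - ΔX with hu
  set v : E := ΔΘ + ΔX with hv
  have hAu : Gf u = -ΔX := (eq_neg_of_add_eq_zero_right h1)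
  have hBv : GP v = ΔX := (sub_eq_zero.mp h2).symm
  have hvu : v = u + (2 : ℝ) • ΔX := by
    rw [hu, hv, hΩΘ]; module
  -- key identity: qA + qB = 2‖ΔX‖²
  have hsum : ⟪Gf u, u⟫ + ⟪GP v, v⟫ = 2 * ‖ΔX‖ ^ 2 := by
    rw [hAu, hBv, hvu]
    simp only [inner_add_right, inner_neg_left, real_inner_smul_right,
      real_inner_self_eq_norm_sq]
    ring
  -- ‖ΔX‖² ≤ qB
  have hcsB := cs_psd GP hGPsa hGP0 v (GP v)
  rw [hBv] at hcsB
  have hxv : (inner ℝ ΔX v : ℝ) = ⟪GP v, v⟫ := by rw [hBv]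
  rw [hxv] at hcsB
  have hB1 : ⟪GP ΔX, ΔX⟫ ≤ ‖ΔX‖ ^ 2 := hGP1 _
  have hB2 : ⟪ΔX, ΔX⟫ = ‖ΔX‖ ^ 2 := real_inner_self_eq_norm_sq _
  have hBq : 0 ≤ ⟪GP v, v⟫ := hGP0 v
  have hBle : ‖ΔX‖ ^ 2 ≤ ⟪GP v, v⟫ := by
    rcases eq_or_lt_of_le (sq_nonneg ‖ΔX‖) with h0 | h0
    · rw [← h0]; exact hBq
    · nlinarith [hcsB, hB1, hBq, h0, hB2,
        mul_le_mul_of_nonneg_left hB1 hBq]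
  rcases eq_or_ne ΔX 0 with hX | hX
  · -- ΔX = 0 : then Gf u = 0 forces u = 0
    subst hX
    have hGfu : Gf u = 0 := by rw [hAu, neg_zero]
    have hu0 : u = 0 := by
      by_contra h
      have := hGf0 u h
      rw [hGfu] at this
      simp at this
    have hΩ : ΔΩ = 0 := by
      have : ΔΩ - 0 = 0 := hu0
      simpa using this
    exact ⟨hΩ, hΩΘ ▸ hΩ, rfl⟩
  · -- ΔX ≠ 0 : derive a contradiction
    exfalso
    have hGfu : Gf u ≠ 0 := by rw [hAu]; simpa using hX
    have hu0 : u ≠ 0 := by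
      intro h; apply hGfu; rw [h, map_zero]
    have hqA : 0 < ⟪Gf u, u⟫ := hGf0 u hu0
    have hcsA := cs_psd Gf hGfsa hGf0' u (Gf u)
    have hA1 : ⟪Gf (Gf u), Gf u⟫ < ‖Gf u‖ ^ 2 := hGf1 _ hGfu
    have hA2 : ⟪Gf u, Gf u⟫ = ‖Gf u‖ ^ 2 := real_inner_self_eq_norm_sq _
    have hnorm : ‖Gf u‖ = ‖ΔX‖ := by rw [hAu, norm_neg]
    have hXpos : 0 < ‖ΔX‖ ^ 2 := pow_pos (norm_pos_iff.mpr hX) 2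
    -- strict: ‖ΔX‖² < qA
    rw [hnorm] at hA1 hA2
    rw [hA2] at hcsA
    have hAlt : ‖ΔX‖ ^ 2 < ⟪Gf u, u⟫ := by
      nlinarith [hcsA, hA1, hqA, hXpos, mul_lt_mul_of_pos_left hA1 hqA]
    linarith [hsum, hBle, hAlt]
end

section
/- Let p ≥ 1 and let Y be a real symmetric p×p matrix such that −Y is positive definite. Then the supremum over symmetric positive definite p×p matrices X of ⟨X, Y⟩ + log det(X) equals −log det(−Y) − p, and it is attained uniquely at X = −Y⁻¹ (which is symmetric positive definite). -/
open Matrix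
open scoped MatrixOrder

lemma aux_trace_eq_sum_eigenvalues {p : ℕ} {M : Matrix (Fin p) (Fin p) ℝ}
    (hM : M.IsHermitian) : M.trace = ∑ i, hM.eigenvalues i := by
  nth_rewrite 1 [hM.spectral_theorem]
  rw [Unitary.conjStarAlgAut_apply, trace_mul_cycle,
    Unitary.coe_star_mul_self, one_mul]
  simp [trace_diagonal]

lemma aux_eq_one_of_eigenvalues {p : ℕ} {M : Matrix (Fin p) (Fin p) ℝ}
    (hM : M.IsHermitian) (h : ∀ i, hM.eigenvalues i = 1) : M = 1 := by
  have hd : (RCLike.ofReal ∘ hM.eigenvalues : Fin p → ℝ) = fun _ => 1 :=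
    funext fun i => by simp [h i]
  rw [hM.spectral_theorem, hd]
  simpa using (Matrix.mem_unitaryGroup_iff).mp (hM.eigenvectorUnitary).2

set_option maxHeartbeats 1000000 in
lemma aux_key {p : ℕ} {A X : Matrix (Fin p) (Fin p) ℝ}
    (hA : A.PosDef) (hX : X.PosDef) (hne : X ≠ A⁻¹) :
    -(X * A).trace + Real.log X.det < -Real.log A.det - p := by
  set S := CFC.sqrt A with hSdef
  have hSsd : S.PosSemidef := (CFC.sqrt_nonneg A).posSemidef
  have hSH : Sᴴ = S := hSsd.isHermitian
  have hSS : S * S = A := CFC.sqrt_mul_sqrt_self A hA.posSemidef.nonneg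
  have hdetSS : S.det * S.det = A.det := by rw [← det_mul, hSS]
  have hdetS : S.det ≠ 0 := by
    intro h; rw [h, mul_zero] at hdetSS; exact hA.det_pos.ne hdetSS
  have hSunit : IsUnit S := (isUnit_iff_isUnit_det _).mpr hdetS.isUnit
  have hSinj : Function.Injective (S.mulVec) := mulVec_injective_iff_isUnit.mpr hSunit
  set M := S * X * S with hMdef
  have hMH : M.IsHermitian := by
    show Mᴴ = M
    rw [hMdef]
    simp only [conjTranspose_mul, hSH, hX.1.eq, ← mul_assoc]
  have hM : M.PosDef := by
    refine PosDef.of_dotProduct_mulVec_pos hMH ?_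
    intro x hx
    have hSx : S *ᵥ x ≠ 0 := fun h => hx (hSinj (by simpa using h))
    have : M = Sᴴ * X * S := by rw [hSH]
    rw [this]
    simpa only [star_mulVec, dotProduct_mulVec, vecMul_vecMul] using hX.dotProduct_mulVec_pos hSx
  -- trace
  have htr : (X * A).trace = M.trace := by
    rw [← hSS, ← mul_assoc, trace_mul_comm, ← mul_assoc]
  -- det
  have hdetM : M.det = A.det * X.det := by
    rw [hMdef, det_mul, det_mul, ← hdetSS]; ring
  have hlogdetM : Real.log M.det = Real.log A.det + Real.log X.det :=
    hdetM ▸ Real.log_mul hA.det_pos.ne' hX.det_pos.ne'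
  -- eigenvalues
  set μ := hM.1.eigenvalues with hμdef
  have hμpos : ∀ i, 0 < μ i := hM.eigenvalues_pos
  have htrM : M.trace = ∑ i, μ i := aux_trace_eq_sum_eigenvalues hM.1
  have hdetMμ : M.det = ∏ i, μ i := by
    have := hM.1.det_eq_prod_eigenvalues
    simpa using this
  have hMne1 : M ≠ 1 := by
    intro h
    apply hne
    have : S⁻¹ * M * S⁻¹ = X := by
      rw [hMdef, ← mul_assoc, ← mul_assoc, nonsing_inv_mul _ hdetS.isUnit, one_mul,
        mul_assoc, mul_nonsing_inv _ hdetS.isUnit, mul_one]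
    rw [← this, h, mul_one, ← Matrix.mul_inv_rev, hSS]
  have hex : ∃ i, μ i ≠ 1 := by
    by_contra h
    push_neg at h
    exact hMne1 (aux_eq_one_of_eigenvalues hM.1 h)
  obtain ⟨i₀, hi₀⟩ := hex
  have hlog : Real.log M.det = ∑ i, Real.log (μ i) := by
    rw [hdetMμ, Real.log_prod]
    exact fun i _ => (hμpos i).ne'
  have hsum : ∑ i, (Real.log (μ i) - μ i) < ∑ _i : Fin p, (-1 : ℝ) := by
    apply Finset.sum_lt_sum
    · intro i _
      have := Real.log_le_sub_one_of_pos (hμpos i)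
      linarith
    · exact ⟨i₀, Finset.mem_univ _, by
        have := Real.log_lt_sub_one_of_pos (hμpos i₀) hi₀
        linarith⟩
  have hsum' : ∑ i, Real.log (μ i) - ∑ i, μ i < -(p : ℝ) := by
    rw [← Finset.sum_sub_distrib]
    simpa using hsum
  have : -M.trace + Real.log M.det < -(p:ℝ) := by
    rw [htrM, hlog]; linarith
  rw [htr]
  linarith [hlogdetM, this]

/-- For `p ≥ 1` and a real symmetric `p×p` matrix `Y` with `-Y` positive
definite, the supremum over symmetric positive definite `X` of `⟨X, Y⟩ + log det X`
equals `-log det (-Y) - p`, attained uniquely at `X = -Y⁻¹` (which is symmetric positive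
definite). -/
theorem stmt10 {p : ℕ} (hp : 1 ≤ p)
    (Y : Matrix (Fin p) (Fin p) ℝ) (hY : Y.IsSymm) (hYpd : (-Y).PosDef) :
    (-Y⁻¹ : Matrix (Fin p) (Fin p) ℝ).PosDef ∧
    (∑ i, ∑ j, (-Y⁻¹ : Matrix (Fin p) (Fin p) ℝ) i j * Y i j)
        + Real.log (-Y⁻¹ : Matrix (Fin p) (Fin p) ℝ).det
      = -Real.log (-Y).det - p ∧
    ∀ X : Matrix (Fin p) (Fin p) ℝ, X.PosDef → X ≠ -Y⁻¹ →
      (∑ i, ∑ j, X i j * Y i j) + Real.log X.det < -Real.log (-Y).det - p := by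
  set A := -Y with hAdef
  have hYunit : IsUnit Y.det := by
    have h : (-Y).det ≠ 0 := hYpd.det_pos.ne'
    rw [det_neg] at h
    exact (by intro h0; rw [h0, mul_zero] at h; exact h rfl : Y.det ≠ 0).isUnit
  have hinv : -Y⁻¹ = A⁻¹ := by
    refine (inv_eq_right_inv ?_).symm
    rw [hAdef, Matrix.neg_mul, Matrix.mul_neg, neg_neg, mul_nonsing_inv _ hYunit]
  have hApd : A⁻¹.PosDef := hYpd.inv
  -- trace identity  ∑∑ X i j * Y i j = (X * Y).trace
  have hdot : ∀ X : Matrix (Fin p) (Fin p) ℝ,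
      (∑ i, ∑ j, X i j * Y i j) = (X * Y).trace := by
    intro X
    rw [Matrix.trace]
    simp only [Matrix.diag_apply, Matrix.mul_apply]
    refine Finset.sum_congr rfl fun i _ => Finset.sum_congr rfl fun j _ => ?_
    rw [show Y j i = Y i j from hY.apply i j]
  refine ⟨hinv ▸ hApd, ?_, ?_⟩
  · rw [hinv, hdot]
    have h1 : (A⁻¹ * Y).trace = -(p : ℝ) := by
      have : A⁻¹ * Y = -(1 : Matrix (Fin p) (Fin p) ℝ) := by
        rw [show Y = -A from by rw [hAdef, neg_neg], Matrix.mul_neg,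
          nonsing_inv_mul _ hYpd.det_pos.ne'.isUnit]
      rw [this, trace_neg, trace_one]
      simp
    have h2 : Real.log (A⁻¹).det = -Real.log A.det := by
      rw [det_nonsing_inv, Ring.inverse_eq_inv, Real.log_inv]
    rw [h1, h2]; ring
  · intro X hX hne
    have hne' : X ≠ A⁻¹ := fun h => hne (h.trans hinv.symm)
    have := aux_key hYpd hX hne'
    rw [hdot]
    have hXY : (X * Y).trace = -(X * A).trace := by
      rw [hAdef, Matrix.mul_neg, trace_neg, neg_neg]
    rw [hXY]
    linarith
end

section
/- (Closed form of the sparse group Lasso proximal mapping underlying (2.5).) Let K ≥ 1, λ₁, λ₂ > 0, and u ∈ ℝ^K. Define v ∈ ℝ^K by v_i = sign(u_i)·max(|u_i| − λ₁, 0) (soft-thresholding), and define w = v − Π(v), where Π(v) is the Euclidean projection of v onto the ball {x ∈ ℝ^K : ‖x‖₂ ≤ λ₂}, i.e., Π(v) = v if ‖v‖₂ ≤ λ₂ and Π(v) = (λ₂/‖v‖₂)·v otherwise. Then w is the unique minimizer over x ∈ ℝ^K of φ(x) + (1/2)‖x − u‖₂², where φ(x) = λ₁‖x‖₁ + λ₂‖x‖₂.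 -/
/-- Cauchy–Schwarz for finite sums in sqrt form. -/
private lemma cs_aux {K : ℕ} (a b : Fin K → ℝ) :
    ∑ i, a i * b i ≤ Real.sqrt (∑ i, (a i) ^ 2) * Real.sqrt (∑ i, (b i) ^ 2) := by
  calc ∑ i, a i * b i ≤ |∑ i, a i * b i| := le_abs_self _
    _ = Real.sqrt ((∑ i, a i * b i) ^ 2) := (Real.sqrt_sq_eq_abs _).symm
    _ ≤ Real.sqrt ((∑ i, (a i) ^ 2) * (∑ i, (b i) ^ 2)) := by
        apply Real.sqrt_le_sqrt
        exact Finset.sum_mul_sq_le_sq_mul_sq Finset.univ a b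
    _ = Real.sqrt (∑ i, (a i) ^ 2) * Real.sqrt (∑ i, (b i) ^ 2) := by
        rw [Real.sqrt_mul (by positivity)]

/-- closed form of the sparse group Lasso proximal mapping underlying (2.5):
with `v = soft-threshold_{λ₁}(u)` and `w = v - Π_{‖·‖₂ ≤ λ₂}(v)`, the vector `w` is the
unique minimizer of `x ↦ λ₁‖x‖₁ + λ₂‖x‖₂ + (1/2)‖x - u‖₂²` over `ℝ^K`. -/
theorem stmt15 {K : ℕ} (hK : 1 ≤ K)
    (lam1 lam2 : ℝ) (hlam1 : 0 < lam1) (hlam2 : 0 < lam2)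
    (u v w Piv : Fin K → ℝ)
    (hv : ∀ i, v i = Real.sign (u i) * max (|u i| - lam1) 0)
    (hPiv : Piv = if Real.sqrt (∑ i, (v i) ^ 2) ≤ lam2 then v
      else (lam2 / Real.sqrt (∑ i, (v i) ^ 2)) • v)
    (hw : w = v - Piv) :
    ∀ x : Fin K → ℝ, x ≠ w →
      lam1 * (∑ i, |w i|) + lam2 * Real.sqrt (∑ i, (w i) ^ 2)
          + (1 / 2) * ∑ i, (w i - u i) ^ 2
        < lam1 * (∑ i, |x i|) + lam2 * Real.sqrt (∑ i, (x i) ^ 2)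
          + (1 / 2) * ∑ i, (x i - u i) ^ 2 := by
  intro x hx
  -- pointwise soft-thresholding facts
  have key1 : ∀ i, |u i - v i| ≤ lam1 := by
    intro i
    rw [hv i]
    rcases lt_trichotomy (u i) 0 with h | h | h
    · rw [Real.sign_of_neg h]
      rcases le_or_gt (-(u i)) lam1 with h2 | h2
      · rw [abs_of_neg h, max_eq_right (by linarith)]
        rw [abs_of_nonpos (by linarith)]; linarith
      · rw [abs_of_neg h, max_eq_left (by linarith)]
        rw [show u i - -1 * (-u i - lam1) = -lam1 by ring, abs_neg,
          abs_of_pos hlam1]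
    · simp [h, abs_of_nonneg, le_of_lt hlam1]
    · rw [Real.sign_of_pos h]
      rcases le_or_gt (u i) lam1 with h2 | h2
      · rw [abs_of_pos h, max_eq_right (by linarith)]
        rw [abs_of_nonneg (by linarith)]; linarith
      · rw [abs_of_pos h, max_eq_left (by linarith)]
        rw [show u i - 1 * (u i - lam1) = lam1 by ring, abs_of_pos hlam1]
  have key2 : ∀ i, (u i - v i) * v i = lam1 * |v i| := by
    intro i
    rw [hv i]
    rcases lt_trichotomy (u i) 0 with h | h | h
    · rw [Real.sign_of_neg h]
      rcases le_or_gt (-(u i)) lam1 with h2 | h2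
      · rw [abs_of_neg h, max_eq_right (by linarith)]; simp
      · rw [abs_of_neg h, max_eq_left (by linarith)]
        rw [abs_of_nonpos (by nlinarith)]; ring
    · simp [h]
    · rw [Real.sign_of_pos h]
      rcases le_or_gt (u i) lam1 with h2 | h2
      · rw [abs_of_pos h, max_eq_right (by linarith)]; simp
      · rw [abs_of_pos h, max_eq_left (by linarith)]
        rw [abs_of_nonneg (by nlinarith)]; ring
  -- facts about Piv and w
  set N := Real.sqrt (∑ i, (v i) ^ 2) with hNdef
  have hN0 : 0 ≤ N := Real.sqrt_nonneg _
  have hN2 : N ^ 2 = ∑ i, (v i) ^ 2 := Real.sq_sqrt (by positivity)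
  have hPivsq : Real.sqrt (∑ i, (Piv i) ^ 2) ≤ lam2 := by
    rw [hPiv]
    split_ifs with hc
    · exact hc
    · push_neg at hc
      have hNpos : 0 < N := lt_trans hlam2 hc
      have : ∑ i, (((lam2 / N) • v) i) ^ 2 = (lam2 / N) ^ 2 * ∑ i, (v i) ^ 2 := by
        rw [Finset.mul_sum]; apply Finset.sum_congr rfl; intro i _
        simp only [Pi.smul_apply, smul_eq_mul]; ring
      rw [this, ← hN2]
      rw [show (lam2 / N) ^ 2 * N ^ 2 = lam2 ^ 2 by field_simp]
      rw [Real.sqrt_sq (le_of_lt hlam2)]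
  have hPivw : ∑ i, Piv i * w i = lam2 * Real.sqrt (∑ i, (w i) ^ 2) := by
    rw [hPiv] at hw ⊢
    split_ifs at hw ⊢ with hc
    · have hw0 : w = 0 := by rw [hw]; simp
      simp [hw0]
    · push_neg at hc
      have hNpos : 0 < N := lt_trans hlam2 hc
      set c := 1 - lam2 / N with hcdef
      have hcpos : 0 < c := by
        rw [hcdef]; rw [sub_pos, div_lt_one hNpos]; exact hc
      have hwi : ∀ i, w i = c * v i := by
        intro i; rw [hw]; simp only [Pi.sub_apply, Pi.smul_apply, smul_eq_mul]; ring
      have hsumw : ∑ i, (w i) ^ 2 = c ^ 2 * N ^ 2 := by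
        rw [hN2, Finset.mul_sum]; apply Finset.sum_congr rfl; intro i _
        rw [hwi i]; ring
      have hsqrtw : Real.sqrt (∑ i, (w i) ^ 2) = c * N := by
        rw [hsumw, show c ^ 2 * N ^ 2 = (c * N) ^ 2 by ring,
          Real.sqrt_sq (by positivity)]
      rw [hsqrtw]
      have : ∑ i, ((lam2 / N) • v) i * w i = (lam2 / N) * c * ∑ i, (v i) ^ 2 := by
        rw [Finset.mul_sum]; apply Finset.sum_congr rfl; intro i _
        rw [hwi i]; simp only [Pi.smul_apply, smul_eq_mul]; ring
      rw [this, ← hN2]; field_simp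
  have key2w : ∀ i, (u i - v i) * w i = lam1 * |w i| := by
    intro i
    rw [hPiv] at hw
    split_ifs at hw with hc
    · have : w i = 0 := by rw [hw]; simp
      simp [this]
    · push_neg at hc
      have hNpos : 0 < N := lt_trans hlam2 hc
      set c := 1 - lam2 / N with hcdef
      have hcpos : 0 < c := by
        rw [hcdef]; rw [sub_pos, div_lt_one hNpos]; exact hc
      have hwi : w i = c * v i := by
        rw [hw]; simp only [Pi.sub_apply, Pi.smul_apply, smul_eq_mul]; ring
      rw [hwi, abs_mul, abs_of_pos hcpos]
      calc (u i - v i) * (c * v i) = c * ((u i - v i) * v i) := by ring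
        _ = c * (lam1 * |v i|) := by rw [key2 i]
        _ = lam1 * (c * |v i|) := by ring
  -- the three inequalities
  have ineq1 : ∑ i, (u i - v i) * (x i - w i) ≤ lam1 * (∑ i, |x i|) - lam1 * (∑ i, |w i|) := by
    rw [Finset.mul_sum, Finset.mul_sum, ← Finset.sum_sub_distrib]
    apply Finset.sum_le_sum
    intro i _
    have h1 : (u i - v i) * x i ≤ lam1 * |x i| := by
      calc (u i - v i) * x i ≤ |(u i - v i) * x i| := le_abs_self _
        _ = |u i - v i| * |x i| := abs_mul _ _
        _ ≤ lam1 * |x i| := by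
            apply mul_le_mul_of_nonneg_right (key1 i) (abs_nonneg _)
    have h2 := key2w i
    nlinarith [h1, h2]
  have ineq2 : ∑ i, Piv i * (x i - w i) ≤
      lam2 * Real.sqrt (∑ i, (x i) ^ 2) - lam2 * Real.sqrt (∑ i, (w i) ^ 2) := by
    have h1 : ∑ i, Piv i * x i ≤ lam2 * Real.sqrt (∑ i, (x i) ^ 2) := by
      calc ∑ i, Piv i * x i
          ≤ Real.sqrt (∑ i, (Piv i) ^ 2) * Real.sqrt (∑ i, (x i) ^ 2) := cs_aux _ _
        _ ≤ lam2 * Real.sqrt (∑ i, (x i) ^ 2) := by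
            apply mul_le_mul_of_nonneg_right hPivsq (Real.sqrt_nonneg _)
    have h2 : ∑ i, Piv i * (x i - w i) = (∑ i, Piv i * x i) - ∑ i, Piv i * w i := by
      rw [← Finset.sum_sub_distrib]; apply Finset.sum_congr rfl; intro i _; ring
    rw [h2, hPivw]; linarith
  have ineq3 : (1 / 2) * ∑ i, (x i - u i) ^ 2 - (1 / 2) * ∑ i, (w i - u i) ^ 2
      = (∑ i, (w i - u i) * (x i - w i)) + (1 / 2) * ∑ i, (x i - w i) ^ 2 := by
    rw [Finset.mul_sum, Finset.mul_sum, Finset.mul_sum, ← Finset.sum_sub_distrib,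
      ← Finset.sum_add_distrib]
    apply Finset.sum_congr rfl; intro i _; ring
  -- the linear terms cancel
  have hcancel : ∑ i, ((u i - v i) + Piv i + (w i - u i)) * (x i - w i) = 0 := by
    apply Finset.sum_eq_zero
    intro i _
    have : Piv i = v i - w i := by rw [hw]; simp
    rw [this]; ring
  have hsplit : ∑ i, ((u i - v i) + Piv i + (w i - u i)) * (x i - w i)
      = (∑ i, (u i - v i) * (x i - w i)) + (∑ i, Piv i * (x i - w i))
        + ∑ i, (w i - u i) * (x i - w i) := by
    rw [← Finset.sum_add_distrib, ← Finset.sum_add_distrib]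
    apply Finset.sum_congr rfl; intro i _; ring
  -- strict positivity of the quadratic remainder
  have hpos : 0 < ∑ i, (x i - w i) ^ 2 := by
    obtain ⟨i, hi⟩ := Function.ne_iff.mp hx
    apply Finset.sum_pos' (fun j _ => sq_nonneg _)
    exact ⟨i, Finset.mem_univ i,
      lt_of_le_of_ne (sq_nonneg _) (Ne.symm (pow_ne_zero 2 (sub_ne_zero.mpr hi)))⟩
  have hzero : (∑ i, (u i - v i) * (x i - w i)) + (∑ i, Piv i * (x i - w i))
      + ∑ i, (w i - u i) * (x i - w i) = 0 := by rw [← hsplit, hcancel]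
  linarith [ineq1, ineq2, ineq3, hpos, hzero]
end
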